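/- arXiv:2305.09029 — 8 statements merged into one kernel-verified Lean document; each statement's English description precedes it below -/
import Mathlib

section
/- Let {f_k}_{k≥0} be a log-concave (respectively, log-convex) sequence, let n be a positive integer, and let A_0, A_1, …, A_{⌊n/2⌋} be real numbers having no more than one change of sign, i.e., there exist indices 0 ≤ p ≤ q ≤ ⌊n/2⌋+1 such that A_k < 0 for k < p, A_k = 0 for p ≤ k < q, and A_k > 0 for q ≤ k ≤ ⌊n/2⌋. If Σ_{k=0}^{⌊n/2⌋} A_k ≥ 0 (respectively, ≤ 0), then Σ_{k=0}^{⌊n/2⌋} f_k f_{n−k} A_k ≥ 0 (respectively, ≤ 0). -/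
/-- A nonnegative, not identically zero real sequence is log-concave if
`f k * f (k+2) ≤ f (k+1) ^ 2` for all `k` and its support is an interval of integers. -/
def IsLogConcaveSeq (f : ℕ → ℝ) : Prop :=
  (∀ k, 0 ≤ f k) ∧ (∃ k, f k ≠ 0) ∧
  (∀ k : ℕ, f k * f (k + 2) ≤ (f (k + 1)) ^ 2) ∧
  (∀ N : ℕ, f N = 0 → (∀ i : ℕ, f (N + i) = 0) ∨ (∀ i : ℕ, i ≤ N → f (N - i) = 0))

/-- A nonnegative, not identically zero real sequence is log-convex if
`f (k+1) ^ 2 ≤ f k * f (k+2)` for all `k`. -/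
def IsLogConvexSeq (f : ℕ → ℝ) : Prop :=
  (∀ k, 0 ≤ f k) ∧ (∃ k, f k ≠ 0) ∧
  (∀ k : ℕ, (f (k + 1)) ^ 2 ≤ f k * f (k + 2))

/-- The finite sequence `A 0, …, A M` has no more than one change of sign:
pattern `(-- ⋯ -- 0 ⋯ 0 ++ ⋯ ++)`, any part possibly missing. -/
def OneSignChange (A : ℕ → ℝ) (M : ℕ) : Prop :=
  ∃ p q : ℕ, p ≤ q ∧ q ≤ M + 1 ∧
    (∀ k, k < p → A k < 0) ∧
    (∀ k, p ≤ k → k < q → A k = 0) ∧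
    (∀ k, q ≤ k → k ≤ M → 0 < A k)

/-!
Put `g k = f k * f (n - k)`. Log-concavity makes the ratios `f (k + 1) / f k` decrease, so `g` is
increasing on `[0, n / 2]`; log-convexity makes them increase, so `g` is decreasing there (the
only log-convex sequences with a zero vanish from index `1` on, and then `g` vanishes on
`[0, n / 2]` unless `n = 0`). If `m` is the index where `A` changes sign, each term satisfies
`g k * A k ≥ g m * A k` (resp. `≤`), and summing gives `∑ g k A k ≥ g m ∑ A k ≥ 0` (resp. `≤ 0`).
-/

open Finset

theorem mul_succ_le_succ_mul_of_mul_le_sq {f : ℕ → ℝ} (hf0 : ∀ k, 0 ≤ f k)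
    (hc : ∀ k, f k * f (k + 2) ≤ f (k + 1) ^ 2) {a b : ℕ} (hab : a ≤ b)
    (hpos : ∀ j, a ≤ j → j < b → 0 < f j) :
    f a * f (b + 1) ≤ f (a + 1) * f b := by
  induction b, hab using Nat.le_induction with
  | base => rw [mul_comm]
  | succ b hab ih =>
    have ih := ih fun j h1 h2 => hpos j h1 (by omega)
    refine le_of_mul_le_mul_right ?_ (hpos b hab (by omega))
    calc f a * f (b + 1 + 1) * f b = f a * (f b * f (b + 2)) := by ring
      _ ≤ f a * f (b + 1) ^ 2 := mul_le_mul_of_nonneg_left (hc b) (hf0 a)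
      _ = f a * f (b + 1) * f (b + 1) := by ring
      _ ≤ f (a + 1) * f b * f (b + 1) := mul_le_mul_of_nonneg_right ih (hf0 _)
      _ = f (a + 1) * f (b + 1) * f b := by ring

theorem succ_mul_le_mul_succ_of_sq_le_mul {f : ℕ → ℝ} (hf0 : ∀ k, 0 ≤ f k)
    (hc : ∀ k, f (k + 1) ^ 2 ≤ f k * f (k + 2)) {a b : ℕ} (hab : a ≤ b)
    (hpos : ∀ j, a < j → j ≤ b → 0 < f j) :
    f (a + 1) * f b ≤ f a * f (b + 1) := by
  induction b, hab using Nat.le_induction with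
  | base => rw [mul_comm]
  | succ b hab ih =>
    have ih := ih fun j h1 h2 => hpos j h1 (by omega)
    refine le_of_mul_le_mul_right ?_ (hpos (b + 1) (by omega) le_rfl)
    calc f (a + 1) * f (b + 1) * f (b + 1) = f (a + 1) * f (b + 1) ^ 2 := by ring
      _ ≤ f (a + 1) * (f b * f (b + 2)) := mul_le_mul_of_nonneg_left (hc b) (hf0 _)
      _ = f (a + 1) * f b * f (b + 2) := by ring
      _ ≤ f a * f (b + 1) * f (b + 2) := mul_le_mul_of_nonneg_right ih (hf0 _)
      _ = f a * f (b + 1 + 1) * f (b + 1) := by ring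

theorem monotoneOn_mul_reflect_of_step {f : ℕ → ℝ} {n : ℕ}
    (hstep : ∀ j, j + 1 ≤ n / 2 → f j * f (n - j) ≤ f (j + 1) * f (n - (j + 1))) :
    MonotoneOn (fun k => f k * f (n - k)) (Set.Iic (n / 2)) :=
  monotoneOn_of_le_succ Set.ordConnected_Iic fun j _ _ hj => by
    simpa [Order.succ_eq_add_one] using hstep j hj

theorem antitoneOn_mul_reflect_of_step {f : ℕ → ℝ} {n : ℕ}
    (hstep : ∀ j, j + 1 ≤ n / 2 → f (j + 1) * f (n - (j + 1)) ≤ f j * f (n - j)) :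
    AntitoneOn (fun k => f k * f (n - k)) (Set.Iic (n / 2)) :=
  antitoneOn_of_succ_le Set.ordConnected_Iic fun j _ _ hj => by
    simpa [Order.succ_eq_add_one] using hstep j hj

namespace IsLogConcaveSeq

variable {f : ℕ → ℝ} (hf : IsLogConcaveSeq f)
include hf

theorem pos_of_le_of_le {a c j : ℕ} (ha : 0 < f a) (hc : 0 < f c) (haj : a ≤ j)
    (hjc : j ≤ c) : 0 < f j := by
  refine (hf.1 j).lt_of_ne' fun hj => ?_
  rcases hf.2.2.2 j hj with hright | hleft
  · exact hc.ne' (by simpa [Nat.add_sub_cancel' hjc] using hright (c - j))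
  · exact ha.ne' (by simpa [Nat.sub_sub_self haj] using hleft (j - a) (by omega))

theorem mul_succ_le_succ_mul {a b : ℕ} (hab : a ≤ b) :
    f a * f (b + 1) ≤ f (a + 1) * f b := by
  have hprod : 0 ≤ f (a + 1) * f b := mul_nonneg (hf.1 _) (hf.1 _)
  rcases (hf.1 a).eq_or_lt with ha | ha
  · simpa [← ha] using hprod
  rcases (hf.1 (b + 1)).eq_or_lt with hb | hb
  · simpa [← hb] using hprod
  exact mul_succ_le_succ_mul_of_mul_le_sq hf.1 hf.2.2.1 hab
    fun j haj hjb => hf.pos_of_le_of_le ha hb haj (by omega)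

theorem monotoneOn_mul_reflect (n : ℕ) :
    MonotoneOn (fun k => f k * f (n - k)) (Set.Iic (n / 2)) :=
  monotoneOn_mul_reflect_of_step fun j hj => by
    simpa [show n - (j + 1) + 1 = n - j by omega] using
      hf.mul_succ_le_succ_mul (a := j) (b := n - (j + 1)) (by omega)

end IsLogConcaveSeq

namespace IsLogConvexSeq

variable {f : ℕ → ℝ} (hf : IsLogConvexSeq f)
include hf

theorem pos_of_le {a j : ℕ} (ha : 0 < f (a + 1)) (haj : a + 1 ≤ j) : 0 < f j := by
  induction j, haj using Nat.le_induction with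
  | base => exact ha
  | succ j hj ih =>
    refine (hf.1 (j + 1)).lt_of_ne' fun hj1 => ih.ne' ?_
    have hsq : f j ^ 2 ≤ 0 := by
      simpa [show j - 1 + 1 = j by omega, show j - 1 + 2 = j + 1 by omega, hj1] using
        hf.2.2 (j - 1)
    exact pow_eq_zero_iff two_ne_zero |>.mp (le_antisymm hsq (sq_nonneg _))

theorem succ_mul_le_mul_succ {a b : ℕ} (hab : a ≤ b) :
    f (a + 1) * f b ≤ f a * f (b + 1) := by
  rcases (hf.1 (a + 1)).eq_or_lt with ha | ha
  · simpa [← ha] using mul_nonneg (hf.1 a) (hf.1 (b + 1))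
  exact succ_mul_le_mul_succ_of_sq_le_mul hf.1 hf.2.2 hab fun j haj _ => hf.pos_of_le ha haj

theorem antitoneOn_mul_reflect (n : ℕ) :
    AntitoneOn (fun k => f k * f (n - k)) (Set.Iic (n / 2)) :=
  antitoneOn_mul_reflect_of_step fun j hj => by
    simpa [show n - (j + 1) + 1 = n - j by omega] using
      hf.succ_mul_le_mul_succ (a := j) (b := n - (j + 1)) (by omega)

end IsLogConvexSeq

theorem OneSignChange.exists_pivot {A : ℕ → ℝ} {M : ℕ} (hA : OneSignChange A M) :
    ∃ m ≤ M, (∀ k < m, A k ≤ 0) ∧ ∀ k, m < k → k ≤ M → 0 ≤ A k := by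
  obtain ⟨p, q, -, -, hneg, hzero, hpos⟩ := hA
  refine ⟨min p M, min_le_right _ _, fun k hk => (hneg k (by omega)).le, fun k hk hkM => ?_⟩
  rcases lt_or_ge k q with hkq | hqk
  · exact (hzero k (by omega) hkq).ge
  · exact (hpos k hqk hkM).le

section Pivot

variable {g A : ℕ → ℝ} {M m : ℕ} (hm : m ≤ M) (hneg : ∀ k < m, A k ≤ 0)
  (hpos : ∀ k, m < k → k ≤ M → 0 ≤ A k)
include hm hneg hpos

theorem mul_sum_le_sum_mul_of_monotoneOn (hg : MonotoneOn g (Set.Iic M)) :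
    g m * ∑ k ∈ range (M + 1), A k ≤ ∑ k ∈ range (M + 1), g k * A k := by
  rw [mul_sum]
  refine sum_le_sum fun k hk => ?_
  have hkM : k ≤ M := Nat.lt_succ_iff.mp (mem_range.mp hk)
  rcases lt_trichotomy k m with hkm | rfl | hmk
  · exact mul_le_mul_of_nonpos_right (hg hkM hm hkm.le) (hneg k hkm)
  · exact le_rfl
  · exact mul_le_mul_of_nonneg_right (hg hm hkM hmk.le) (hpos k hmk hkM)

theorem sum_mul_le_mul_sum_of_antitoneOn (hg : AntitoneOn g (Set.Iic M)) :
    ∑ k ∈ range (M + 1), g k * A k ≤ g m * ∑ k ∈ range (M + 1), A k := by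
  simpa [neg_mul, sum_neg_distrib] using
    mul_sum_le_sum_mul_of_monotoneOn (g := fun k => -g k) hm hneg hpos hg.neg

end Pivot

theorem stmt_1_general (f A : ℕ → ℝ) (n : ℕ)
    (hsign : OneSignChange A (n / 2)) :
    (IsLogConcaveSeq f → 0 ≤ ∑ k ∈ Finset.range (n / 2 + 1), A k →
      0 ≤ ∑ k ∈ Finset.range (n / 2 + 1), f k * f (n - k) * A k) ∧
    (IsLogConvexSeq f → (∑ k ∈ Finset.range (n / 2 + 1), A k) ≤ 0 →
      (∑ k ∈ Finset.range (n / 2 + 1), f k * f (n - k) * A k) ≤ 0) := by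
  obtain ⟨m, hm, hneg, hpos⟩ := hsign.exists_pivot
  refine ⟨fun hf hA => ?_, fun hf hA => ?_⟩
  · calc 0 ≤ f m * f (n - m) * ∑ k ∈ range (n / 2 + 1), A k :=
          mul_nonneg (mul_nonneg (hf.1 m) (hf.1 _)) hA
      _ ≤ _ := mul_sum_le_sum_mul_of_monotoneOn hm hneg hpos (hf.monotoneOn_mul_reflect n)
  · calc _ ≤ f m * f (n - m) * ∑ k ∈ range (n / 2 + 1), A k :=
          sum_mul_le_mul_sum_of_antitoneOn hm hneg hpos (hf.antitoneOn_mul_reflect n)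
      _ ≤ 0 := mul_nonpos_of_nonneg_of_nonpos (mul_nonneg (hf.1 m) (hf.1 _)) hA

theorem stmt_1 (f A : ℕ → ℝ) (n : ℕ) (hn : 1 ≤ n)
    (hsign : OneSignChange A (n / 2)) :
    (IsLogConcaveSeq f → 0 ≤ ∑ k ∈ Finset.range (n / 2 + 1), A k →
      0 ≤ ∑ k ∈ Finset.range (n / 2 + 1), f k * f (n - k) * A k) ∧
    (IsLogConvexSeq f → (∑ k ∈ Finset.range (n / 2 + 1), A k) ≤ 0 →
      (∑ k ∈ Finset.range (n / 2 + 1), f k * f (n - k) * A k) ≤ 0) :=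
  stmt_1_general f A n hsign
end

section
/- Let f : [0,∞) → (0,∞) be a positive function satisfying the Turán type inequality f(μ+1)^2 ≥ f(μ)f(μ+2) for all μ ≥ 0. Then f(μ+α)f(μ+β) ≥ f(μ)f(μ+α+β) for all positive integers α, β and all μ ≥ 0. (The same statement holds with all inequalities reversed.) -/
/-!
Along each arithmetic progression `μ, μ + 1, μ + 2, …` the Turán inequality says that the ratios
`f (μ + n + 1) / f (μ + n)` decrease in `n`. Hence `f (μ + β + α) / f (μ + β)`, a product of `α`
consecutive ratios starting at index `β`, is at most the product of the first `α` ratios,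
`f (μ + α) / f μ`. The reversed inequality follows by applying this to `1 / f`.
-/

namespace TuranSequence

variable {a : ℕ → ℝ}

lemma antitone_ratio (ha : ∀ n, 0 < a n) (h : ∀ n, a n * a (n + 2) ≤ a (n + 1) ^ 2) :
    Antitone fun n => a (n + 1) / a n := by
  refine antitone_nat_of_succ_le fun n => ?_
  rw [div_le_div_iff₀ (ha _) (ha _)]
  nlinarith [h n]

lemma div_le_div_of_antitone_ratio (ha : ∀ n, 0 < a n) (h : Antitone fun n => a (n + 1) / a n)
    (m n : ℕ) : a (n + m) / a n ≤ a m / a 0 := by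
  induction m with
  | zero => simp [(ha n).ne', (ha 0).ne']
  | succ m ih =>
    have hratio : a (n + m + 1) / a (n + m) ≤ a (m + 1) / a m := h (Nat.le_add_left m n)
    calc a (n + (m + 1)) / a n = a (n + m + 1) / a (n + m) * (a (n + m) / a n) :=
          (div_mul_div_cancel₀ (ha _).ne').symm
      _ ≤ a (m + 1) / a m * (a m / a 0) :=
          mul_le_mul hratio ih (div_nonneg (ha _).le (ha _).le) (div_nonneg (ha _).le (ha _).le)
      _ = a (m + 1) / a 0 := div_mul_div_cancel₀ (ha m).ne'

lemma mul_le_mul_of_sq_ge (ha : ∀ n, 0 < a n) (h : ∀ n, a n * a (n + 2) ≤ a (n + 1) ^ 2)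
    (m n : ℕ) : a 0 * a (m + n) ≤ a m * a n := by
  have key := div_le_div_of_antitone_ratio ha (antitone_ratio ha h) m n
  rw [div_le_div_iff₀ (ha n) (ha 0), add_comm n m] at key
  linarith

lemma mul_le_mul_of_sq_le (ha : ∀ n, 0 < a n) (h : ∀ n, a (n + 1) ^ 2 ≤ a n * a (n + 2))
    (m n : ℕ) : a m * a n ≤ a 0 * a (m + n) := by
  have hinv : ∀ n, (a n)⁻¹ * (a (n + 2))⁻¹ ≤ (a (n + 1))⁻¹ ^ 2 := fun n => by
    rw [← mul_inv, inv_pow, inv_le_inv₀ (mul_pos (ha _) (ha _)) (pow_pos (ha _) 2)]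
    exact h n
  have key := mul_le_mul_of_sq_ge (a := fun n => (a n)⁻¹) (fun n => inv_pos.2 (ha n)) hinv m n
  rwa [← mul_inv, ← mul_inv, inv_le_inv₀ (mul_pos (ha _) (ha _)) (mul_pos (ha _) (ha _))] at key

end TuranSequence

open TuranSequence in
theorem stmt_2 (f : ℝ → ℝ) (hpos : ∀ μ : ℝ, 0 ≤ μ → 0 < f μ) :
    ((∀ μ : ℝ, 0 ≤ μ → f μ * f (μ + 2) ≤ f (μ + 1) ^ 2) →
      ∀ (α β : ℕ), 1 ≤ α → 1 ≤ β → ∀ μ : ℝ, 0 ≤ μ →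
        f μ * f (μ + α + β) ≤ f (μ + α) * f (μ + β)) ∧
    ((∀ μ : ℝ, 0 ≤ μ → f (μ + 1) ^ 2 ≤ f μ * f (μ + 2)) →
      ∀ (α β : ℕ), 1 ≤ α → 1 ≤ β → ∀ μ : ℝ, 0 ≤ μ →
        f (μ + α) * f (μ + β) ≤ f μ * f (μ + α + β)) := by
  have shift (μ : ℝ) (n k : ℕ) : μ + ((n + k : ℕ) : ℝ) = μ + n + k := by push_cast; ring
  have ha (μ : ℝ) (hμ : 0 ≤ μ) (n : ℕ) : 0 < f (μ + n) := hpos _ (by positivity)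
  constructor
  · intro h α β _ _ μ hμ
    have hturan (n : ℕ) : f (μ + n) * f (μ + (n + 2 : ℕ)) ≤ f (μ + (n + 1 : ℕ)) ^ 2 := by
      simpa only [shift, Nat.cast_one, Nat.cast_ofNat, add_assoc, one_add_one_eq_two]
        using h (μ + n) (by positivity)
    simpa only [shift, Nat.cast_zero, add_zero]
      using mul_le_mul_of_sq_ge (a := fun n : ℕ => f (μ + n)) (ha μ hμ) hturan α β
  · intro h α β _ _ μ hμ
    have hturan (n : ℕ) : f (μ + (n + 1 : ℕ)) ^ 2 ≤ f (μ + n) * f (μ + (n + 2 : ℕ)) := by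
      simpa only [shift, Nat.cast_one, Nat.cast_ofNat, add_assoc, one_add_one_eq_two]
        using h (μ + n) (by positivity)
    simpa only [shift, Nat.cast_zero, add_zero]
      using mul_le_mul_of_sq_le (a := fun n : ℕ => f (μ + n)) (ha μ hμ) hturan α β
end

section
/- Let a_n(μ) (n ≥ 0, μ ≥ 0) be a family of real coefficients and fix a positive integer n₀. Suppose that for all μ ≥ 0, all integers β ∈ {1, 2, …, n₀}, and all m ≥ 0 one has δ_m(μ, 1, β) ≥ 0 (respectively, ≤ 0). Then for all μ ≥ 0, all positive integers α, β with α + β ≤ n₀ + 1, and all m ≥ 0 one has δ_m(μ, α, β) ≥ 0 (respectively, ≤ 0). -/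
/-!
Splitting off one unit from each shift gives the identity
`δ_m(μ, α+1, β+1) = δ_m(μ+1, α, β) + δ_m(μ, 1, α+β+1)`.
Iterating it lowers `α` without increasing `α + β` or leaving `μ ≥ 0`, so every
`δ_m(μ, α, β)` is a sum of Turánians with first shift `1`; with the symmetry
`δ_m(μ, α, β) = δ_m(μ, β, α)` this reaches all `α + β ≤ n₀ + 1`. Any sign condition
closed under addition therefore propagates.
-/

/-- The `m`-th power series coefficient of the generalized Turánian
`f(μ+α;x)f(μ+β;x) − f(μ;x)f(μ+α+β;x)` of `f(μ;x) = Σ_{n≥0} a n μ * x^n`. -/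
def turanCoeff (a : ℕ → ℝ → ℝ) (m : ℕ) (μ α β : ℝ) : ℝ :=
  ∑ k ∈ Finset.range (m + 1),
    (a k (μ + α) * a (m - k) (μ + β) - a k μ * a (m - k) (μ + α + β))

section

variable (a : ℕ → ℝ → ℝ) (m : ℕ)

lemma turanCoeff_comm (μ α β : ℝ) : turanCoeff a m μ α β = turanCoeff a m μ β α := by
  unfold turanCoeff
  rw [Finset.sum_sub_distrib, Finset.sum_sub_distrib, ← Finset.sum_range_reflect,
    add_right_comm μ β α]
  congr 1
  refine Finset.sum_congr rfl fun k hk => ?_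
  have hk : k ≤ m := Nat.lt_succ_iff.mp (Finset.mem_range.mp hk)
  rw [show m + 1 - 1 - k = m - k by omega, Nat.sub_sub_self hk, mul_comm]

lemma turanCoeff_add_one_add_one (μ α β : ℝ) :
    turanCoeff a m μ (α + 1) (β + 1) =
      turanCoeff a m (μ + 1) α β + turanCoeff a m μ 1 (α + β + 1) := by
  unfold turanCoeff
  rw [← Finset.sum_add_distrib]
  refine Finset.sum_congr rfl fun k _ => ?_
  rw [show μ + 1 + α + β = μ + (α + β + 1) by ring, show μ + 1 + α = μ + (α + 1) by ring,
    show μ + 1 + β = μ + (β + 1) by ring,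
    show μ + (α + 1) + (β + 1) = μ + 1 + (α + β + 1) by ring]
  ring

theorem turanCoeff_of_forall_turanCoeff_one (n₀ : ℕ) (P : ℝ → Prop)
    (hP : ∀ x y, P x → P y → P (x + y))
    (h : ∀ μ : ℝ, 0 ≤ μ → ∀ β : ℕ, 1 ≤ β → β ≤ n₀ → P (turanCoeff a m μ 1 β))
    (α : ℕ) : ∀ μ : ℝ, 0 ≤ μ → ∀ β : ℕ, 1 ≤ α → 1 ≤ β → α + β ≤ n₀ + 1 →
      P (turanCoeff a m μ α β) := by
  induction α with
  | zero => intro μ _ β hα; omega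
  | succ α ih =>
    intro μ hμ β _ hβ hsum
    obtain rfl | hα := Nat.eq_zero_or_pos α
    · simpa using h μ hμ β hβ (by omega)
    rcases β with _ | _ | β
    · omega
    · rw [turanCoeff_comm]
      simpa using h μ hμ (α + 1) (by omega) (by omega)
    · push_cast
      rw [turanCoeff_add_one_add_one]
      exact hP _ _ (by exact_mod_cast ih (μ + 1) (by linarith) (β + 1) hα (by omega) (by omega))
        (by exact_mod_cast h μ hμ (α + (β + 1) + 1) (by omega) (by omega))

end

theorem stmt_3_general (a : ℕ → ℝ → ℝ) (n₀ : ℕ) :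
    ((∀ μ : ℝ, 0 ≤ μ → ∀ β : ℕ, 1 ≤ β → β ≤ n₀ → ∀ m : ℕ,
        0 ≤ turanCoeff a m μ 1 (β : ℝ)) →
      ∀ μ : ℝ, 0 ≤ μ → ∀ α β : ℕ, 1 ≤ α → 1 ≤ β → α + β ≤ n₀ + 1 → ∀ m : ℕ,
        0 ≤ turanCoeff a m μ (α : ℝ) (β : ℝ)) ∧
    ((∀ μ : ℝ, 0 ≤ μ → ∀ β : ℕ, 1 ≤ β → β ≤ n₀ → ∀ m : ℕ,
        turanCoeff a m μ 1 (β : ℝ) ≤ 0) →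
      ∀ μ : ℝ, 0 ≤ μ → ∀ α β : ℕ, 1 ≤ α → 1 ≤ β → α + β ≤ n₀ + 1 → ∀ m : ℕ,
        turanCoeff a m μ (α : ℝ) (β : ℝ) ≤ 0) := by
  constructor
  · intro h μ hμ α β hα hβ hsum m
    exact turanCoeff_of_forall_turanCoeff_one a m n₀ (0 ≤ ·) (fun _ _ => add_nonneg)
      (fun μ hμ β h1 h2 => h μ hμ β h1 h2 m) α μ hμ β hα hβ hsum
  · intro h μ hμ α β hα hβ hsum m
    exact turanCoeff_of_forall_turanCoeff_one a m n₀ (· ≤ 0) (fun _ _ => add_nonpos)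
      (fun μ hμ β h1 h2 => h μ hμ β h1 h2 m) α μ hμ β hα hβ hsum

theorem stmt_3 (a : ℕ → ℝ → ℝ) (n₀ : ℕ) (hn₀ : 1 ≤ n₀) :
    ((∀ μ : ℝ, 0 ≤ μ → ∀ β : ℕ, 1 ≤ β → β ≤ n₀ → ∀ m : ℕ,
        0 ≤ turanCoeff a m μ 1 (β : ℝ)) →
      ∀ μ : ℝ, 0 ≤ μ → ∀ α β : ℕ, 1 ≤ α → 1 ≤ β → α + β ≤ n₀ + 1 → ∀ m : ℕ,
        0 ≤ turanCoeff a m μ (α : ℝ) (β : ℝ)) ∧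
    ((∀ μ : ℝ, 0 ≤ μ → ∀ β : ℕ, 1 ≤ β → β ≤ n₀ → ∀ m : ℕ,
        turanCoeff a m μ 1 (β : ℝ) ≤ 0) →
      ∀ μ : ℝ, 0 ≤ μ → ∀ α β : ℕ, 1 ≤ α → 1 ≤ β → α + β ≤ n₀ + 1 → ∀ m : ℕ,
        turanCoeff a m μ (α : ℝ) (β : ℝ) ≤ 0) :=
  stmt_3_general a n₀
end

section
/- Let k and m be nonnegative integers with 1 ≤ k ≤ m/2, let μ ≥ 0 and α, β > 0 be real numbers, and set T_{k,m} := (μ+α)_k (μ+β)_{m−k} + (μ+α)_{m−k} (μ+β)_k − (μ)_k (μ+α+β)_{m−k} − (μ)_{m−k} (μ+α+β)_k. If T_{k,m} ≤ 0, then T_{k−1,m} < 0. -/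
/-- The rising factorial (Pochhammer symbol) `(μ)_n = μ(μ+1)⋯(μ+n−1)`. -/
noncomputable def risingFactorial (μ : ℝ) : ℕ → ℝ
  | 0 => 1
  | n + 1 => risingFactorial μ n * (μ + n)

/-! Write `j = k - 1` and `n = m - k`, so that `j < n`. Peeling off the last factor of every
Pochhammer symbol gives
`(μ+j) T(j, n+1) = (μ+α+β+n) T(j+1, n) - (2μ+α+β+j+n) (α P + β Q)` with
`P = (μ+α)_j (μ+β)_n - (μ)_n (μ+α+β)_j` and `Q = (μ+α)_n (μ+β)_j - (μ)_n (μ+α+β)_j`.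
Both are positive for `j < n`: split `(μ)_n = (μ)_j (μ+j)_{n-j}`, compare
`(μ)_j (μ+α+β)_j ≤ (μ+α)_j (μ+β)_j` factor by factor, and use
`(μ+j)_{n-j} < (μ+β+j)_{n-j}`.
So `T(j+1, n) ≤ 0` forces `T(j, n+1) < 0`. -/

open Finset

namespace risingFactorial

lemma succ (x : ℝ) (n : ℕ) : risingFactorial x (n + 1) = risingFactorial x n * (x + n) := rfl

lemma eq_prod (x : ℝ) (n : ℕ) : risingFactorial x n = ∏ i ∈ range n, (x + i) := by
  induction n with
  | zero => rfl
  | succ n ih => rw [succ, ih, prod_range_succ]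

lemma nonneg {x : ℝ} (hx : 0 ≤ x) (n : ℕ) : 0 ≤ risingFactorial x n := by
  rw [eq_prod]
  exact prod_nonneg fun i _ => by positivity

lemma pos {x : ℝ} (hx : 0 < x) (n : ℕ) : 0 < risingFactorial x n := by
  rw [eq_prod]
  exact prod_pos fun i _ => by positivity

lemma le_left {x y : ℝ} (hx : 0 ≤ x) (hxy : x ≤ y) (n : ℕ) :
    risingFactorial x n ≤ risingFactorial y n := by
  simp only [eq_prod]
  exact prod_le_prod (fun i _ => by positivity) fun i _ => by linarith

lemma lt_left {x y : ℝ} (hx : 0 ≤ x) (hxy : x < y) {n : ℕ} (hn : n ≠ 0) :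
    risingFactorial x n < risingFactorial y n := by
  obtain ⟨n, rfl⟩ := Nat.exists_eq_succ_of_ne_zero hn
  calc risingFactorial x n * (x + n)
      ≤ risingFactorial y n * (x + n) := by gcongr; exact le_left hx hxy.le n
    _ < risingFactorial y n * (y + n) := by gcongr; exact pos (hx.trans_lt hxy) n

lemma add (x : ℝ) (j t : ℕ) :
    risingFactorial x (j + t) = risingFactorial x j * risingFactorial (x + j) t := by
  simp only [eq_prod, prod_range_add, Nat.cast_add, add_assoc]

-- Factor by factor, `(μ + i) * (μ + α + β + i) + α * β = (μ + α + i) * (μ + β + i)`.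
lemma mul_shift_le {μ α β : ℝ} (hμ : 0 ≤ μ) (hα : 0 ≤ α) (hβ : 0 ≤ β) (j : ℕ) :
    risingFactorial μ j * risingFactorial (μ + α + β) j ≤
      risingFactorial (μ + α) j * risingFactorial (μ + β) j := by
  simp only [eq_prod, ← prod_mul_distrib]
  refine prod_le_prod (fun i _ => by positivity) fun i _ => ?_
  nlinarith [mul_nonneg hα hβ]

lemma mul_shift_lt_of_lt {μ α β : ℝ} (hμ : 0 ≤ μ) (hα : 0 < α) (hβ : 0 < β) {j n : ℕ}
    (hjn : j < n) :
    risingFactorial μ n * risingFactorial (μ + α + β) j <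
      risingFactorial (μ + α) j * risingFactorial (μ + β) n := by
  obtain ⟨t, rfl⟩ := Nat.exists_eq_add_of_lt hjn
  rw [add_assoc, add μ, add (μ + β)]
  have hshift := mul_shift_le hμ hα.le hβ.le j
  have htail : risingFactorial (μ + j) (t + 1) < risingFactorial (μ + β + j) (t + 1) :=
    lt_left (by positivity) (by linarith) t.succ_ne_zero
  have hpos : 0 < risingFactorial (μ + α) j * risingFactorial (μ + β) j :=
    mul_pos (pos (by positivity) j) (pos (by positivity) j)
  linarith [mul_lt_mul' hshift htail (nonneg (by positivity) _) hpos]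

end risingFactorial

/-- `T_{k,m}` of the statement is `risingDefect μ α β k (m - k)`. -/
noncomputable def risingDefect (μ α β : ℝ) (a b : ℕ) : ℝ :=
  risingFactorial (μ + α) a * risingFactorial (μ + β) b
    + risingFactorial (μ + α) b * risingFactorial (μ + β) a
    - risingFactorial μ a * risingFactorial (μ + α + β) b
    - risingFactorial μ b * risingFactorial (μ + α + β) a

lemma mul_risingDefect_eq (μ α β : ℝ) (j n : ℕ) :
    (μ + j) * risingDefect μ α β j (n + 1) =
      (μ + α + β + n) * risingDefect μ α β (j + 1) n
        - (2 * μ + α + β + j + n) *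
          (α * (risingFactorial (μ + α) j * risingFactorial (μ + β) n
              - risingFactorial μ n * risingFactorial (μ + α + β) j)
            + β * (risingFactorial (μ + α) n * risingFactorial (μ + β) j
              - risingFactorial μ n * risingFactorial (μ + α + β) j)) := by
  simp only [risingDefect, risingFactorial.succ]
  ring

lemma risingDefect_neg_of_succ_nonpos {μ α β : ℝ} (hμ : 0 ≤ μ) (hα : 0 < α)
    (hβ : 0 < β) {j n : ℕ} (hjn : j < n) (h : risingDefect μ α β (j + 1) n ≤ 0) :
    risingDefect μ α β j (n + 1) < 0 := by
  have hαβ := risingFactorial.mul_shift_lt_of_lt hμ hα hβ hjn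
  have hβα := risingFactorial.mul_shift_lt_of_lt hμ hβ hα hjn
  rw [add_right_comm μ β α] at hβα
  have hpos : 0 < α * (risingFactorial (μ + α) j * risingFactorial (μ + β) n
        - risingFactorial μ n * risingFactorial (μ + α + β) j)
      + β * (risingFactorial (μ + α) n * risingFactorial (μ + β) j
        - risingFactorial μ n * risingFactorial (μ + α + β) j) := by
    refine add_pos (mul_pos hα (sub_pos.2 hαβ)) (mul_pos hβ (sub_pos.2 ?_))
    rwa [mul_comm (risingFactorial (μ + α) n)]
  have hneg : (μ + j) * risingDefect μ α β j (n + 1) < 0 := by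
    rw [mul_risingDefect_eq]
    have : (μ + α + β + n) * risingDefect μ α β (j + 1) n ≤ 0 :=
      mul_nonpos_of_nonneg_of_nonpos (by positivity) h
    have : 0 < (2 * μ + α + β + j + n) * _ := mul_pos (by positivity) hpos
    linarith
  exact neg_of_mul_neg_right hneg (by positivity)

theorem stmt_5 (k m : ℕ) (hk : 1 ≤ k) (hkm : 2 * k ≤ m) (μ α β : ℝ)
    (hμ : 0 ≤ μ) (hα : 0 < α) (hβ : 0 < β)
    (hT : risingFactorial (μ + α) k * risingFactorial (μ + β) (m - k)
        + risingFactorial (μ + α) (m - k) * risingFactorial (μ + β) k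
        - risingFactorial μ k * risingFactorial (μ + α + β) (m - k)
        - risingFactorial μ (m - k) * risingFactorial (μ + α + β) k ≤ 0) :
    risingFactorial (μ + α) (k - 1) * risingFactorial (μ + β) (m - (k - 1))
        + risingFactorial (μ + α) (m - (k - 1)) * risingFactorial (μ + β) (k - 1)
        - risingFactorial μ (k - 1) * risingFactorial (μ + α + β) (m - (k - 1))
        - risingFactorial μ (m - (k - 1)) * risingFactorial (μ + α + β) (k - 1) < 0 := by
  obtain ⟨j, rfl⟩ := Nat.exists_eq_add_of_le' hk
  change risingDefect μ α β (j + 1) (m - (j + 1)) ≤ 0 at hT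
  change risingDefect μ α β (j + 1 - 1) (m - (j + 1 - 1)) < 0
  rw [Nat.add_sub_cancel, show m - j = m - (j + 1) + 1 by omega]
  exact risingDefect_neg_of_succ_nonpos hμ hα hβ (by omega) hT
end

section
/- For every integer m ≥ 1, every real μ ≥ 0, and all real α, β > 0, Σ_{k=0}^{m} [ (μ+α)_{2k}(μ+β)_{2(m−k)} − (μ)_{2k}(μ+α+β)_{2(m−k)} ] / ( (2k)! (2(m−k))! ) < 0. Equivalently, the function ψ(μ;x) = Σ_{n≥0} (μ)_{2n} x^n/(2n)! is coefficient-wise log-convex in μ with strictly negative Turánian coefficients. -/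
/-!
Write `F a = (1 - x)^(-a)` and `G a = (1 + x)^(-a)`, so that `F (a + b) = F a * F b`,
`G (a + b) = G a * G b` and `ψ(a; x²) = (F a + G a) / 2`. Expanding the products, four times the
Turánian `ψ(μ+α) ψ(μ+β) - ψ(μ) ψ(μ+α+β)`, taken at `x²`, equals
`-(F μ * G μ) * (F α - G α) * (F β - G β)`. Here `F μ * G μ = (1 - x²)^(-μ)` has nonnegative
coefficients and constant term `1`, while `F γ - G γ` has nonnegative coefficients that are positive
in odd degrees; hence the coefficient of `x^(2m)` of this product is positive for `m ≥ 1`.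
-/

open PowerSeries Ring

theorem risingFactorial_eq_eval_ascPochhammer (a : ℝ) (n : ℕ) :
    risingFactorial a n = (ascPochhammer ℝ n).eval a := by
  induction n with
  | zero => simp [risingFactorial]
  | succ n ih => rw [risingFactorial, ih, ascPochhammer_succ_eval]

theorem risingFactorial_nonneg {a : ℝ} (ha : 0 ≤ a) (n : ℕ) : 0 ≤ risingFactorial a n := by
  induction n with
  | zero => exact zero_le_one
  | succ n ih => exact mul_nonneg ih (by positivity)

namespace Ring

theorem factorial_mul_multichoose (a : ℝ) (n : ℕ) :
    (n.factorial : ℝ) * multichoose a n = risingFactorial a n := by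
  rw [← nsmul_eq_mul, factorial_nsmul_multichoose_eq_ascPochhammer,
    Polynomial.ascPochhammer_smeval_eq_eval, risingFactorial_eq_eval_ascPochhammer]

theorem multichoose_eq_risingFactorial_div (a : ℝ) (n : ℕ) :
    multichoose a n = risingFactorial a n / n.factorial := by
  rw [← factorial_mul_multichoose, mul_div_cancel_left₀ _ (by positivity)]

theorem multichoose_nonneg {a : ℝ} (ha : 0 ≤ a) (n : ℕ) : 0 ≤ multichoose a n := by
  rw [multichoose_eq_risingFactorial_div]
  exact div_nonneg (risingFactorial_nonneg ha n) (by positivity)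

theorem multichoose_pos {a : ℝ} (ha : 0 < a) (n : ℕ) : 0 < multichoose a n := by
  rw [multichoose_eq_risingFactorial_div, risingFactorial_eq_eval_ascPochhammer]
  exact div_pos (ascPochhammer_pos n a ha) (by positivity)

theorem succ_mul_multichoose_succ (a : ℝ) (n : ℕ) :
    ((n : ℝ) + 1) * multichoose a (n + 1) = a * multichoose (a + 1) n := by
  have hn : (n.factorial : ℝ) ≠ 0 := by positivity
  apply mul_left_cancel₀ hn
  calc (n.factorial : ℝ) * (((n : ℝ) + 1) * multichoose a (n + 1))
      = (ascPochhammer ℝ (n + 1)).eval a := by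
        rw [← risingFactorial_eq_eval_ascPochhammer, ← factorial_mul_multichoose,
          Nat.factorial_succ]
        push_cast
        ring
    _ = a * (ascPochhammer ℝ n).eval (a + 1) := by simp [ascPochhammer_succ_left]
    _ = n.factorial * (a * multichoose (a + 1) n) := by
        rw [← risingFactorial_eq_eval_ascPochhammer, ← factorial_mul_multichoose]
        ring

end Ring

namespace PowerSeries

theorem derivative_rescale {R : Type*} [CommSemiring R] (r : R) (f : R⟦X⟧) :
    d⁄dX R (rescale r f) = C r * rescale r (d⁄dX R f) := by
  ext n
  rw [coeff_derivative, coeff_C_mul, coeff_rescale, coeff_rescale, coeff_derivative, pow_succ]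
  ring

theorem rescale_C {R : Type*} [CommSemiring R] (r a : R) : rescale r (C a) = C a := by
  ext n
  rw [coeff_rescale, coeff_C]
  split_ifs with h <;> simp [h]

theorem derivative_expand {R : Type*} [CommRing R] (p : ℕ) (hp : p ≠ 0) (f : R⟦X⟧) :
    d⁄dX R (expand p hp f) = (p : R⟦X⟧) * X ^ (p - 1) * expand p hp (d⁄dX R f) := by
  rw [expand_apply, expand_apply, derivative_subst (HasSubst.X_pow hp), derivative_pow,
    derivative_X]
  ring

theorem eq_of_derivative_eq_C_mul_X_mul {ι R : Type*} [CommRing R] [IsDomain R] [CharZero R]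
    (s : ι → ι) (c : ι → R) {H K : ι → R⟦X⟧}
    (hH : ∀ i, d⁄dX R (H i) = C (c i) * (X * H (s i)))
    (hK : ∀ i, d⁄dX R (K i) = C (c i) * (X * K (s i)))
    (h0 : ∀ i, constantCoeff (H i) = constantCoeff (K i)) : H = K := by
  suffices h : ∀ n i, coeff n (H i) = coeff n (K i) from
    funext fun i => ext fun n => h n i
  intro n
  induction n using Nat.strong_induction_on with
  | _ n ih =>
    intro i
    cases n with
    | zero => simpa using h0 i
    | succ n =>
      have hn : ((n : R) + 1) ≠ 0 := by exact_mod_cast n.succ_ne_zero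
      apply mul_right_cancel₀ hn
      rw [← coeff_derivative, ← coeff_derivative, hH, hK, coeff_C_mul, coeff_C_mul]
      cases n with
      | zero => simp
      | succ n => rw [coeff_succ_X_mul, coeff_succ_X_mul, ih n (by omega)]

theorem coeff_mul_nonneg {R : Type*} [CommSemiring R] [PartialOrder R] [IsOrderedRing R]
    {f g : R⟦X⟧} (hf : ∀ n, 0 ≤ coeff n f) (hg : ∀ n, 0 ≤ coeff n g) (n : ℕ) :
    0 ≤ coeff n (f * g) := by
  rw [coeff_mul]
  exact Finset.sum_nonneg fun p _ => mul_nonneg (hf p.1) (hg p.2)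

theorem coeff_add_mul_pos {R : Type*} [CommSemiring R] [PartialOrder R] [IsStrictOrderedRing R]
    {f g : R⟦X⟧} (hf : ∀ n, 0 ≤ coeff n f) (hg : ∀ n, 0 ≤ coeff n g) {i j : ℕ}
    (hi : 0 < coeff i f) (hj : 0 < coeff j g) : 0 < coeff (i + j) (f * g) := by
  rw [coeff_mul]
  exact Finset.sum_pos' (fun p _ => mul_nonneg (hf p.1) (hg p.2))
    ⟨(i, j), Finset.HasAntidiagonal.mem_antidiagonal.mpr rfl, mul_pos hi hj⟩

/-- The power series of `(1 - X) ^ (-a)`. -/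
noncomputable def invOneSubRpow (a : ℝ) : ℝ⟦X⟧ := mk (multichoose a)

@[simp]
theorem coeff_invOneSubRpow (a : ℝ) (n : ℕ) : coeff n (invOneSubRpow a) = multichoose a n :=
  coeff_mk _ _

@[simp]
theorem constantCoeff_invOneSubRpow (a : ℝ) : constantCoeff (invOneSubRpow a) = 1 := by
  rw [← coeff_zero_eq_constantCoeff_apply, coeff_invOneSubRpow, multichoose_zero_right]

theorem invOneSubRpow_eq_rescale_binomialSeries (a : ℝ) :
    invOneSubRpow a = rescale (-1) (binomialSeries ℝ (-a)) := by
  ext n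
  rw [coeff_rescale, binomialSeries_coeff, choose_neg', Units.smul_def, smul_eq_mul, mul_one,
    zsmul_eq_mul, Int.cast_negOnePow_natCast, ← mul_assoc, ← mul_pow]
  simp

theorem invOneSubRpow_add (a b : ℝ) :
    invOneSubRpow (a + b) = invOneSubRpow a * invOneSubRpow b := by
  simp only [invOneSubRpow_eq_rescale_binomialSeries, neg_add, binomialSeries_add, map_mul]

theorem invOneSubRpow_eq_one_sub_X_mul (a : ℝ) :
    invOneSubRpow a = (1 - X) * invOneSubRpow (a + 1) := by
  ext n
  rw [sub_mul, one_mul, map_sub]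
  cases n with
  | zero => simp
  | succ n => simp [coeff_succ_X_mul, multichoose_succ_succ]

theorem derivative_invOneSubRpow (a : ℝ) :
    d⁄dX ℝ (invOneSubRpow a) = C a * invOneSubRpow (a + 1) := by
  ext n
  rw [coeff_derivative, coeff_C_mul, coeff_invOneSubRpow, coeff_invOneSubRpow, mul_comm,
    succ_mul_multichoose_succ]

theorem invOneSubRpow_mul_rescale_neg_one (a : ℝ) :
    invOneSubRpow a * rescale (-1) (invOneSubRpow a) =
      expand 2 two_ne_zero (invOneSubRpow a) := by
  refine congrFun (eq_of_derivative_eq_C_mul_X_mul (· + 1) (2 * ·)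
    (H := fun a => invOneSubRpow a * rescale (-1) (invOneSubRpow a))
    (K := fun a => expand 2 two_ne_zero (invOneSubRpow a)) ?_ ?_ ?_) a
  · intro a
    have hG : rescale (-1) (invOneSubRpow a) =
        (1 + X) * rescale (-1) (invOneSubRpow (a + 1)) := by
      rw [invOneSubRpow_eq_one_sub_X_mul a, map_mul, map_sub, map_one, rescale_neg_one_X,
        sub_neg_eq_add]
    simp only [Derivation.leibniz, smul_eq_mul, derivative_rescale, derivative_invOneSubRpow,
      map_mul, rescale_C, map_ofNat]
    rw [hG, invOneSubRpow_eq_one_sub_X_mul a]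
    simp only [map_neg, map_one]
    ring
  · intro a
    rw [derivative_expand, derivative_invOneSubRpow, map_mul, expand_C, map_mul, map_ofNat]
    push_cast
    ring
  · intro a
    rw [map_mul, constantCoeff_expand, ← coeff_zero_eq_constantCoeff_apply (rescale _ _),
      coeff_rescale, pow_zero, one_mul, coeff_zero_eq_constantCoeff_apply,
      constantCoeff_invOneSubRpow, mul_one]

theorem coeff_invOneSubRpow_sub_rescale (a : ℝ) (n : ℕ) :
    coeff n (invOneSubRpow a - rescale (-1) (invOneSubRpow a)) =
      (1 - (-1) ^ n) * multichoose a n := by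
  rw [map_sub, coeff_rescale, coeff_invOneSubRpow]
  ring

theorem coeff_invOneSubRpow_sub_rescale_nonneg {a : ℝ} (ha : 0 ≤ a) (n : ℕ) :
    0 ≤ coeff n (invOneSubRpow a - rescale (-1) (invOneSubRpow a)) := by
  rw [coeff_invOneSubRpow_sub_rescale]
  rcases n.even_or_odd with hn | hn
  · simp [hn.neg_one_pow]
  · rw [hn.neg_one_pow]
    linarith [multichoose_nonneg ha n]

theorem coeff_invOneSubRpow_sub_rescale_pos {a : ℝ} (ha : 0 < a) {n : ℕ} (hn : Odd n) :
    0 < coeff n (invOneSubRpow a - rescale (-1) (invOneSubRpow a)) := by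
  rw [coeff_invOneSubRpow_sub_rescale, hn.neg_one_pow]
  linarith [multichoose_pos ha n]

theorem coeff_expand_invOneSubRpow_nonneg {a : ℝ} (ha : 0 ≤ a) (n : ℕ) :
    0 ≤ coeff n (expand 2 two_ne_zero (invOneSubRpow a)) := by
  rw [coeff_expand]
  split_ifs
  · exact multichoose_nonneg ha _
  · exact le_rfl

/-- The series `ψ(μ; x) = ∑ₙ (μ)₂ₙ xⁿ / (2n)!` of the paper. -/
noncomputable def psi (μ : ℝ) : ℝ⟦X⟧ := mk fun n => multichoose μ (2 * n)

theorem coeff_psi_mul_psi (a b : ℝ) (m : ℕ) :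
    coeff m (psi a * psi b) =
      ∑ k ∈ Finset.range (m + 1), multichoose a (2 * k) * multichoose b (2 * (m - k)) := by
  rw [coeff_mul, Finset.Nat.sum_antidiagonal_eq_sum_range_succ_mk]
  simp [psi]

theorem two_smul_expand_psi (a : ℝ) :
    (2 : ℝ) • expand 2 two_ne_zero (psi a) =
      invOneSubRpow a + rescale (-1) (invOneSubRpow a) := by
  ext n
  rw [coeff_smul, map_add, coeff_rescale, coeff_invOneSubRpow]
  obtain ⟨k, rfl | rfl⟩ := n.even_or_odd'
  · rw [coeff_expand_mul, psi, coeff_mk, pow_mul]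
    norm_num
    ring
  · rw [coeff_expand_of_not_dvd _ _ _ (by omega), pow_succ, pow_mul]
    norm_num

theorem four_smul_expand_psi_turan (μ α β : ℝ) :
    (4 : ℝ) • expand 2 two_ne_zero
        (psi (μ + α) * psi (μ + β) - psi μ * psi (μ + α + β)) =
      -(expand 2 two_ne_zero (invOneSubRpow μ) *
        ((invOneSubRpow α - rescale (-1) (invOneSubRpow α)) *
          (invOneSubRpow β - rescale (-1) (invOneSubRpow β)))) := by
  have h4 : ∀ A B C D : ℝ⟦X⟧, (4 : ℝ) • (A * B - C * D) =
      ((2 : ℝ) • A) * ((2 : ℝ) • B) - ((2 : ℝ) • C) * ((2 : ℝ) • D) := by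
    intro A B C D
    simp only [smul_mul_smul_comm, ← smul_sub]
    norm_num
  rw [map_sub, map_mul, map_mul, h4, two_smul_expand_psi, two_smul_expand_psi,
    two_smul_expand_psi, two_smul_expand_psi, ← invOneSubRpow_mul_rescale_neg_one]
  simp only [invOneSubRpow_add, map_mul]
  ring

theorem coeff_psi_turan_neg {μ α β : ℝ} (hμ : 0 ≤ μ) (hα : 0 < α) (hβ : 0 < β) {m : ℕ}
    (hm : 1 ≤ m) : coeff m (psi (μ + α) * psi (μ + β) - psi μ * psi (μ + α + β)) < 0 := by
  have hαβ : 0 < coeff (2 * m)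
      ((invOneSubRpow α - rescale (-1) (invOneSubRpow α)) *
        (invOneSubRpow β - rescale (-1) (invOneSubRpow β))) := by
    rw [show 2 * m = 1 + (2 * m - 1) by omega]
    exact coeff_add_mul_pos (coeff_invOneSubRpow_sub_rescale_nonneg hα.le)
      (coeff_invOneSubRpow_sub_rescale_nonneg hβ.le)
      (coeff_invOneSubRpow_sub_rescale_pos hα odd_one)
      (coeff_invOneSubRpow_sub_rescale_pos hβ ⟨m - 1, by omega⟩)
  have hμαβ := zero_add (2 * m) ▸ coeff_add_mul_pos (coeff_expand_invOneSubRpow_nonneg hμ)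
    (coeff_mul_nonneg (coeff_invOneSubRpow_sub_rescale_nonneg hα.le)
      (coeff_invOneSubRpow_sub_rescale_nonneg hβ.le)) (by simp) hαβ
  have h := congrArg (coeff (2 * m)) (four_smul_expand_psi_turan μ α β)
  rw [coeff_smul, smul_eq_mul, coeff_expand_mul, map_neg] at h
  linarith

end PowerSeries

open PowerSeries in
theorem stmt_8 (m : ℕ) (hm : 1 ≤ m) (μ α β : ℝ) (hμ : 0 ≤ μ) (hα : 0 < α) (hβ : 0 < β) :
    ∑ k ∈ Finset.range (m + 1),
      (risingFactorial (μ + α) (2 * k) * risingFactorial (μ + β) (2 * (m - k))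
        - risingFactorial μ (2 * k) * risingFactorial (μ + α + β) (2 * (m - k))) /
        ((Nat.factorial (2 * k) : ℝ) * (Nat.factorial (2 * (m - k)) : ℝ)) < 0 := by
  have h := coeff_psi_turan_neg hμ hα hβ hm
  rw [map_sub, coeff_psi_mul_psi, coeff_psi_mul_psi, ← Finset.sum_sub_distrib] at h
  convert h using 2 with k
  simp only [multichoose_eq_risingFactorial_div]
  ring
end

section
/- Let {f_n}_{n≥1} be a log-concave sequence (indexed from n = 1). Define a_0(μ) = 0 and a_n(μ) = f_n (μ)_{2n}/(2n−1)! for n ≥ 1. Then for every μ ≥ 0, every α, β > 0, and every integer m ≥ 0, Σ_{k=0}^{m} [ a_k(μ+α)a_{m−k}(μ+β) − a_k(μ)a_{m−k}(μ+α+β) ] ≥ 0. In other words, the formal power series f(μ;x) = Σ_{n≥1} f_n (μ)_{2n} x^n/(2n−1)! is coefficient-wise log-concave in μ. -/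
/-- The coefficients `a_0(μ) = 0`, `a_n(μ) = f_n (μ)_{2n}/(2n−1)!` for `n ≥ 1`. -/
noncomputable def coeff (f : ℕ → ℝ) (n : ℕ) (μ : ℝ) : ℝ :=
  if n = 0 then 0 else f n * risingFactorial μ (2 * n) / (Nat.factorial (2 * n - 1) : ℝ)

open Finset

local notation "rf" => risingFactorial

theorem risingFactorial_eq_ascPochhammer_eval (x : ℝ) (n : ℕ) :
    rf x n = (ascPochhammer ℝ n).eval x := by
  induction n with
  | zero => simp [risingFactorial]
  | succ n ih => rw [risingFactorial, ih, ascPochhammer_succ_eval]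

@[simp]
theorem risingFactorial_zero (x : ℝ) : rf x 0 = 1 := rfl

theorem risingFactorial_succ (x : ℝ) (n : ℕ) : rf x (n + 1) = rf x n * (x + n) := rfl

theorem risingFactorial_add (x : ℝ) (a b : ℕ) : rf x (a + b) = rf x a * rf (x + a) b := by
  simp [risingFactorial_eq_ascPochhammer_eval, ← ascPochhammer_mul]

theorem risingFactorial_succ_left (x : ℝ) (n : ℕ) : rf x (n + 1) = x * rf (x + 1) n := by
  simp [risingFactorial_eq_ascPochhammer_eval, ascPochhammer_succ_left]

theorem zero_risingFactorial {n : ℕ} (hn : n ≠ 0) : rf 0 n = 0 := by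
  rw [risingFactorial_eq_ascPochhammer_eval, ascPochhammer_ne_zero_eval_zero ℝ hn]

theorem risingFactorial_pos {x : ℝ} (hx : 0 < x) (n : ℕ) : 0 < rf x n := by
  rw [risingFactorial_eq_ascPochhammer_eval]
  exact ascPochhammer_pos n x hx

theorem risingFactorial_nonneg_s9 {x : ℝ} (hx : 0 ≤ x) (n : ℕ) : 0 ≤ rf x n := by
  induction n with
  | zero => exact zero_le_one
  | succ n ih => rw [risingFactorial_succ]; positivity

theorem risingFactorial_le_risingFactorial {x y : ℝ} (hx : 0 ≤ x) (hxy : x ≤ y) (n : ℕ) :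
    rf x n ≤ rf y n := by
  induction n with
  | zero => rfl
  | succ n ih =>
    rw [risingFactorial_succ, risingFactorial_succ]
    exact mul_le_mul ih (by linarith) (add_nonneg hx n.cast_nonneg)
      (risingFactorial_nonneg_s9 (hx.trans hxy) n)

theorem risingFactorial_add_monotoneOn {c : ℝ} (hc : 0 ≤ c) (n : ℕ) :
    MonotoneOn (fun x => rf (x + c) n) (Set.Ici 0) :=
  fun _ hx _ _ hxy =>
    risingFactorial_le_risingFactorial (add_nonneg (Set.mem_Ici.mp hx) hc) (by linarith) n

theorem risingFactorial_monotoneOn (n : ℕ) : MonotoneOn (rf · n) (Set.Ici 0) := by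
  simpa using risingFactorial_add_monotoneOn le_rfl n

noncomputable def pochTerm (ε a b : ℝ) (n i : ℕ) : ℝ :=
  ε ^ i * rf a i * rf b (n - i) / (i.factorial * (n - i).factorial)

/-- The coefficient of `tⁿ` in `(1 - ε t)^(-a) (1 - t)^(-b)`. -/
noncomputable def pochConv (ε a b : ℝ) (n : ℕ) : ℝ := ∑ i ∈ range (n + 1), pochTerm ε a b n i

noncomputable def pochMoment (ε a b : ℝ) (n : ℕ) : ℝ :=
  ∑ i ∈ range (n + 1), (i : ℝ) * pochTerm ε a b n i

section PochConv

variable (ε a b : ℝ)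

theorem succ_mul_pochTerm_succ (n i : ℕ) :
    ((i : ℝ) + 1) * pochTerm ε a b (n + 1) (i + 1) = ε * (a + i) * pochTerm ε a b n i := by
  simp only [pochTerm, Nat.add_sub_add_right, risingFactorial_succ, pow_succ, Nat.factorial_succ]
  push_cast
  field_simp

theorem sub_mul_pochTerm_succ {n i : ℕ} (hi : i ≤ n) :
    ((n : ℝ) + 1 - i) * pochTerm ε a b (n + 1) i = (b + n - i) * pochTerm ε a b n i := by
  obtain ⟨j, rfl⟩ := Nat.exists_eq_add_of_le hi
  simp only [pochTerm, show i + j + 1 - i = j + 1 by omega, Nat.add_sub_cancel_left,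
    risingFactorial_succ, Nat.factorial_succ]
  push_cast
  field_simp
  ring

theorem pochMoment_succ (n : ℕ) :
    pochMoment ε a b (n + 1) = ε * (a * pochConv ε a b n + pochMoment ε a b n) := by
  rw [pochMoment, sum_range_succ']
  simp only [Nat.cast_add, Nat.cast_one, succ_mul_pochTerm_succ, Nat.cast_zero, zero_mul, add_zero]
  rw [pochConv, pochMoment, mul_sum, ← sum_add_distrib, mul_sum]
  exact sum_congr rfl fun i _ => by ring

theorem succ_mul_pochConv_succ_sub (n : ℕ) :
    ((n : ℝ) + 1) * pochConv ε a b (n + 1) - pochMoment ε a b (n + 1)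
      = (b + n) * pochConv ε a b n - pochMoment ε a b n := by
  have hdiff : ∀ m : ℕ, (m : ℝ) * pochConv ε a b m - pochMoment ε a b m
      = ∑ i ∈ range (m + 1), ((m : ℝ) - i) * pochTerm ε a b m i := fun m => by
    rw [pochConv, pochMoment, mul_sum, ← sum_sub_distrib]
    exact sum_congr rfl fun i _ => by ring
  have hsucc := hdiff (n + 1)
  push_cast at hsucc
  rw [hsucc, sum_range_succ, pochConv, pochMoment, mul_sum, ← sum_sub_distrib]
  simp only [Nat.cast_add, Nat.cast_one, sub_self, zero_mul, add_zero]
  refine sum_congr rfl fun i hi => ?_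
  rw [sub_mul_pochTerm_succ _ _ _ (Nat.lt_succ_iff.mp (mem_range.mp hi))]
  ring

theorem pochConv_zero : pochConv ε a b 0 = 1 := by simp [pochConv, pochTerm]

theorem pochConv_one : pochConv ε a b 1 = ε * a + b := by
  simp [pochConv, pochTerm, sum_range_succ, risingFactorial_succ, add_comm]

theorem pochConv_one_left (n : ℕ) : pochConv 1 a b n = rf (a + b) n / n.factorial := by
  induction n with
  | zero => simp [pochConv_zero]
  | succ n ih =>
    have h₁ := pochMoment_succ 1 a b n
    have h₂ := succ_mul_pochConv_succ_sub 1 a b n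
    rw [ih] at h₁ h₂
    have hrec : ((n : ℝ) + 1) * pochConv 1 a b (n + 1)
        = (a + b + n) * (rf (a + b) n / n.factorial) := by
      linear_combination h₂ + h₁
    apply mul_left_cancel₀ (by positivity : ((n : ℝ) + 1) ≠ 0)
    rw [hrec, risingFactorial_succ, Nat.factorial_succ]
    push_cast
    field_simp

theorem pochConv_zero_left (n : ℕ) : pochConv ε 0 b n = rf b n / n.factorial := by
  rw [pochConv, sum_eq_single 0]
  · simp [pochTerm]
  · intro i _ hi
    simp [pochTerm, zero_risingFactorial hi]
  · simp

theorem pochConv_neg_one_recurrence (n : ℕ) :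
    ((n : ℝ) + 2) * pochConv (-1) a b (n + 2)
      = (b - a) * pochConv (-1) a b (n + 1) + (a + b + n) * pochConv (-1) a b n := by
  have h₁ := pochMoment_succ (-1) a b n
  have h₂ := pochMoment_succ (-1) a b (n + 1)
  have h₃ := succ_mul_pochConv_succ_sub (-1) a b n
  have h₄ := succ_mul_pochConv_succ_sub (-1) a b (n + 1)
  push_cast at h₄
  linear_combination h₄ + h₂ - h₁ + h₃

end PochConv

noncomputable def convTerm (x y : ℝ) (m k : ℕ) : ℝ :=
  rf x (2 * k) * rf y (2 * (m - k)) / ((2 * k - 1).factorial * (2 * (m - k) - 1).factorial)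

theorem sum_range_one_sub_neg_one_pow_mul (g : ℕ → ℝ) (M : ℕ) :
    ∑ i ∈ range (2 * M + 1), (1 - (-1 : ℝ) ^ i) * g i = 2 * ∑ k ∈ range M, g (2 * k + 1) := by
  induction M with
  | zero => simp
  | succ M ih =>
    rw [show 2 * (M + 1) + 1 = 2 * M + 1 + 1 + 1 by ring, sum_range_succ, sum_range_succ, ih,
      sum_range_succ]
    simp only [pow_succ, pow_mul]
    ring

theorem sum_Icc_convTerm (x y : ℝ) {m : ℕ} (hm : 1 ≤ m) :
    ∑ k ∈ Icc 1 (m - 1), convTerm x y m k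
      = x * y / 2 * (pochConv 1 (x + 1) (y + 1) (2 * m - 2)
          - pochConv (-1) (x + 1) (y + 1) (2 * m - 2)) := by
  obtain ⟨M, rfl⟩ : ∃ M, m = M + 1 := ⟨m - 1, by omega⟩
  have hdiff : ∀ i, pochTerm 1 (x + 1) (y + 1) (2 * M) i - pochTerm (-1) (x + 1) (y + 1) (2 * M) i
      = (1 - (-1) ^ i) * pochTerm 1 (x + 1) (y + 1) (2 * M) i := fun i => by
    simp only [pochTerm]; ring
  rw [show 2 * (M + 1) - 2 = 2 * M by omega, Nat.add_sub_cancel, pochConv, pochConv,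
    ← sum_sub_distrib]
  simp only [hdiff]
  rw [sum_range_one_sub_neg_one_pow_mul, ← Ico_add_one_right_eq_Icc, sum_Ico_eq_sum_range,
    Nat.add_sub_cancel, mul_sum, mul_sum]
  refine sum_congr rfl fun k hk => ?_
  have hkM : k < M := mem_range.mp hk
  simp only [convTerm, pochTerm, one_pow, show 2 * (1 + k) = 2 * k + 1 + 1 by ring,
    show 2 * (M + 1 - (1 + k)) = 2 * M - (2 * k + 1) + 1 by omega, Nat.add_sub_cancel,
    risingFactorial_succ_left]
  ring

theorem nonneg_of_recurrence {H : ℕ → ℕ → ℝ} {σ : ℝ} (hσ : 0 ≤ σ) (h₀ : ∀ r, 0 ≤ H 0 r)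
    (h₁ : ∀ r, H 1 r = H 0 (r + 1))
    (hrec : ∀ n r : ℕ, ((n : ℝ) + 2) * H (n + 2) r = H (n + 1) (r + 1) + (σ + n) * H n r)
    (n r : ℕ) : 0 ≤ H n r := by
  induction n using Nat.twoStepInduction generalizing r with
  | zero => exact h₀ r
  | one => exact (h₁ r).symm ▸ h₀ (r + 1)
  | more n ih₀ ih₁ =>
    refine nonneg_of_mul_nonneg_right ?_ (by positivity : (0 : ℝ) < n + 2)
    rw [hrec]
    have := ih₁ (r + 1)
    have := ih₀ r
    positivity

/-- By `sum_Icc_convTerm` and `pochConv_one_left`, when `x₁ + y₁ = x₂ + y₂`, twice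
`∑ k ∈ Icc 1 (m - 1), (convTerm x₁ y₁ m k - convTerm x₂ y₂ m k)` equals
`pairMoment x₁ y₁ x₂ y₂ (2 * m - 2) 0`. The weights `d ^ r`, with `d = b - a` for each
`pochConv (-1) a b`, make the family closed under `pochConv_neg_one_recurrence`. -/
noncomputable def pairMoment (x₁ y₁ x₂ y₂ : ℝ) (n r : ℕ) : ℝ :=
  (x₁ * y₁ - x₂ * y₂) * (x₁ + y₁ + 2) ^ r * pochConv (-1) 0 (x₁ + y₁ + 2) n
    + x₂ * y₂ * (y₂ - x₂) ^ r * pochConv (-1) (x₂ + 1) (y₂ + 1) n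
    - x₁ * y₁ * (y₁ - x₁) ^ r * pochConv (-1) (x₁ + 1) (y₁ + 1) n

noncomputable def symmProd (i j : ℕ) (x y : ℝ) : ℝ := rf x i * rf y j + rf y i * rf x j

theorem symmProd_add (i a b : ℕ) (x y : ℝ) :
    symmProd (i + a) (i + b) x y = rf x i * rf y i * symmProd a b (x + i) (y + i) := by
  simp only [symmProd, risingFactorial_add]
  ring

theorem symmProd_nonneg {x y : ℝ} (hx : 0 ≤ x) (hy : 0 ≤ y) (i j : ℕ) :
    0 ≤ symmProd i j x y :=
  add_nonneg (mul_nonneg (risingFactorial_nonneg_s9 hx i) (risingFactorial_nonneg_s9 hy j))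
    (mul_nonneg (risingFactorial_nonneg_s9 hy i) (risingFactorial_nonneg_s9 hx j))

theorem convTerm_add_convTerm_sub (x y : ℝ) {m k : ℕ} (hk : k ≤ m) :
    convTerm x y m k + convTerm x y m (m - k)
      = symmProd (2 * k) (2 * (m - k)) x y
          / ((2 * k - 1).factorial * (2 * (m - k) - 1).factorial) := by
  simp only [convTerm, symmProd, Nat.sub_sub_self hk]
  ring

theorem sum_Icc_eq_add_sum_Icc (ψ : ℕ → ℝ) {m j : ℕ} (hj : 2 * (j + 1) ≤ m) :
    ∑ k ∈ Icc j (m - j), ψ k = ψ j + ψ (m - j) + ∑ k ∈ Icc (j + 1) (m - (j + 1)), ψ k := by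
  rw [Icc_eq_cons_Ioc (by omega), sum_cons, Ioc_eq_cons_Ioo (by omega), sum_cons,
    show Ioo j (m - j) = Icc (j + 1) (m - (j + 1)) by ext; simp; omega]
  ring

theorem two_mul_sum_Icc_eq_sum_add_reflect (ψ : ℕ → ℝ) (m j : ℕ) :
    2 * ∑ k ∈ Icc j (m - j), ψ k = ∑ k ∈ Icc j (m - j), (ψ k + ψ (m - k)) := by
  have hreflect : ∑ k ∈ Icc j (m - j), ψ (m - k) = ∑ k ∈ Icc j (m - j), ψ k :=
    sum_nbij' (m - ·) (m - ·) (fun a ha => by simp at ha ⊢; omega)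
      (fun a ha => by simp at ha ⊢; omega) (fun a ha => by simp at ha; omega)
      (fun a ha => by simp at ha; omega) (fun _ _ => rfl)
  rw [sum_add_distrib, hreflect]
  ring

/-- Each central block sum is either at least the full sum over `Icc 1 (m - 1)`, or, once a pair
sum has become positive, half a sum of nonnegative pair sums. -/
theorem sum_Icc_nonneg_of_pairSum {ψ : ℕ → ℝ} {m : ℕ} (h₁ : 0 ≤ ∑ k ∈ Icc 1 (m - 1), ψ k)
    (hstep : ∀ k, 1 ≤ k → 2 * (k + 1) ≤ m → 0 ≤ ψ k + ψ (m - k) →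
      0 ≤ ψ (k + 1) + ψ (m - (k + 1)))
    {j : ℕ} (hj : 1 ≤ j) (hjm : 2 * j ≤ m) : 0 ≤ ∑ k ∈ Icc j (m - j), ψ k := by
  induction j, hj using Nat.le_induction with
  | base => exact h₁
  | succ j hj ih =>
    have hsplit := sum_Icc_eq_add_sum_Icc ψ hjm
    rcases le_or_gt (ψ j + ψ (m - j)) 0 with hP | hP
    · linarith [ih (by omega)]
    · have hpairs : ∀ k, j ≤ k → 2 * k ≤ m → 0 ≤ ψ k + ψ (m - k) := by
        intro k hk
        induction k, hk using Nat.le_induction with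
        | base => exact fun _ => hP.le
        | succ k hk ihk => exact fun hkm => hstep k (by omega) hkm (ihk (by omega))
      have hnonneg : 0 ≤ ∑ k ∈ Icc (j + 1) (m - (j + 1)), (ψ k + ψ (m - k)) := by
        refine sum_nonneg fun k hk => ?_
        rw [mem_Icc] at hk
        rcases le_total (2 * k) m with hkm | hkm
        · exact hpairs k (by omega) hkm
        · have := hpairs (m - k) (by omega) (by omega)
          rwa [Nat.sub_sub_self (by omega), add_comm] at this
      linarith [two_mul_sum_Icc_eq_sum_add_reflect ψ m (j + 1)]

/-- Abel summation: `c` is a combination, with nonnegative multipliers, of the indicators of the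
central blocks `Icc j (m - j)`. -/
theorem sum_mul_nonneg_of_unimodal {c ψ : ℕ → ℝ} {m : ℕ}
    (hsymm : ∀ k ∈ Icc 1 (m - 1), c (m - k) = c k) (hc : ∀ k ∈ Icc 1 (m - 1), 0 ≤ c k)
    (hmono : ∀ j, 1 ≤ j → 2 * (j + 1) ≤ m → c j ≤ c (j + 1))
    (hT : ∀ j, 1 ≤ j → 2 * j ≤ m → 0 ≤ ∑ k ∈ Icc j (m - j), ψ k) :
    0 ≤ ∑ k ∈ Icc 1 (m - 1), c k * ψ k := by
  set c' : ℕ → ℝ := fun k => if k = 0 then 0 else c k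
  have hlayer : ∀ k ∈ Icc 1 (m - 1), c k = ∑ j ∈ range (min k (m - k)), (c' (j + 1) - c' j) := by
    intro k hk
    rw [sum_range_sub]
    rw [mem_Icc] at hk
    rcases le_total k (m - k) with hkm | hkm
    · simp [c', min_eq_left hkm, show k ≠ 0 by omega]
    · simp [c', min_eq_right hkm, show m - k ≠ 0 by omega, hsymm k (mem_Icc.mpr hk)]
  calc 0 ≤ ∑ j ∈ range (m / 2), (c' (j + 1) - c' j) * ∑ k ∈ Icc (j + 1) (m - (j + 1)), ψ k := by
        refine sum_nonneg fun j hj => mul_nonneg ?_ (hT (j + 1) (by omega) ?_)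
        · rw [mem_range] at hj
          rcases j with _ | j
          · simpa [c'] using hc 1 (mem_Icc.mpr ⟨le_rfl, by omega⟩)
          · simpa [c'] using hmono (j + 1) (by omega) (by omega)
        · rw [mem_range] at hj
          omega
    _ = ∑ k ∈ Icc 1 (m - 1), ∑ j ∈ range (min k (m - k)), (c' (j + 1) - c' j) * ψ k := by
        simp_rw [mul_sum]
        exact sum_comm' fun j k => by simp only [mem_range, mem_Icc]; omega
    _ = ∑ k ∈ Icc 1 (m - 1), c k * ψ k := sum_congr rfl fun k hk => by rw [hlayer k hk, sum_mul]

/-- The theorem uses the inner pair `(μ + α, μ + β)` and the outer pair `(μ, μ + α + β)`. -/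
structure NestedPairs (x₁ y₁ x₂ y₂ : ℝ) : Prop where
  add_eq : x₁ + y₁ = x₂ + y₂
  le_left : x₂ ≤ x₁
  le_inner : x₁ ≤ y₁
  nonneg : 0 ≤ x₂

namespace NestedPairs

variable {x₁ y₁ x₂ y₂ : ℝ} (h : NestedPairs x₁ y₁ x₂ y₂)
include h

theorem le_right : y₁ ≤ y₂ := by linarith [h.add_eq, h.le_left]

theorem x₁_nonneg : 0 ≤ x₁ := h.nonneg.trans h.le_left

theorem y₁_nonneg : 0 ≤ y₁ := h.x₁_nonneg.trans h.le_inner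

theorem y₂_nonneg : 0 ≤ y₂ := h.y₁_nonneg.trans h.le_right

theorem shift {c : ℝ} (hc : 0 ≤ c) : NestedPairs (x₁ + c) (y₁ + c) (x₂ + c) (y₂ + c) :=
  ⟨by linarith [h.add_eq], by linarith [h.le_left], by linarith [h.le_inner],
    by linarith [h.nonneg]⟩

theorem mul_le : x₂ * y₂ ≤ x₁ * y₁ := by
  nlinarith [mul_nonneg (sub_nonneg.2 h.le_left) (sub_nonneg.2 (h.le_left.trans h.le_inner)),
    h.add_eq, h.nonneg]

theorem mul_add_le {f g : ℝ → ℝ} (hf : MonotoneOn f (Set.Ici 0)) (hf₀ : 0 ≤ f 0)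
    (hf_add : f x₁ + f y₁ ≤ f x₂ + f y₂) (hg : MonotoneOn g (Set.Ici 0)) (hg₀ : 0 ≤ g 0)
    (hg_add : g x₁ + g y₁ ≤ g x₂ + g y₂) :
    f x₁ * g x₁ + f y₁ * g y₁ ≤ f x₂ * g x₂ + f y₂ * g y₂ := by
  have hx₂ : x₂ ∈ Set.Ici 0 := h.nonneg
  have hx₁ : x₁ ∈ Set.Ici 0 := h.x₁_nonneg
  have hy₁ : y₁ ∈ Set.Ici 0 := h.y₁_nonneg
  have hy₂ : y₂ ∈ Set.Ici 0 := h.y₂_nonneg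
  have hf₂ : 0 ≤ f x₂ := hf₀.trans (hf Set.self_mem_Ici hx₂ hx₂)
  have hg₂ : 0 ≤ g x₂ := hg₀.trans (hg Set.self_mem_Ici hx₂ hx₂)
  have hfa := hf hx₂ hx₁ h.le_left
  have hfb := hf hx₁ hy₁ h.le_inner
  have hfc := hf hy₁ hy₂ h.le_right
  have hga := hg hx₂ hx₁ h.le_left
  have hgb := hg hx₁ hy₁ h.le_inner
  have hgc := hg hy₁ hy₂ h.le_right
  nlinarith [mul_le_mul_of_nonneg_left hg_add hf₂, mul_le_mul_of_nonneg_left hf_add hg₂,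
    mul_nonneg (sub_nonneg.2 hfa) (sub_nonneg.2 hgc),
    mul_nonneg (sub_nonneg.2 hga) (sub_nonneg.2 hfc),
    mul_nonneg (sub_nonneg.2 hfb) (sub_nonneg.2 hgc),
    mul_nonneg (sub_nonneg.2 hgb) (sub_nonneg.2 hfc)]

theorem risingFactorial_add_le (n : ℕ) : rf x₁ n + rf y₁ n ≤ rf x₂ n + rf y₂ n := by
  induction n with
  | zero => simp
  | succ n ih =>
    simp only [risingFactorial_succ]
    exact h.mul_add_le (g := (· + n)) (risingFactorial_monotoneOn n)
      (risingFactorial_nonneg_s9 le_rfl n) ih (fun _ _ _ _ hxy => by simpa using hxy) (by positivity)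
      (by linarith [h.add_eq])

theorem risingFactorial_mul_le (n : ℕ) : rf x₂ n * rf y₂ n ≤ rf x₁ n * rf y₁ n := by
  induction n with
  | zero => simp
  | succ n ih =>
    simp only [risingFactorial_succ]
    calc rf x₂ n * (x₂ + n) * (rf y₂ n * (y₂ + n))
        = rf x₂ n * rf y₂ n * ((x₂ + n) * (y₂ + n)) := by ring
      _ ≤ rf x₁ n * rf y₁ n * ((x₁ + n) * (y₁ + n)) :=
          mul_le_mul ih (h.shift n.cast_nonneg).mul_le
            (mul_nonneg (add_nonneg h.nonneg n.cast_nonneg) (add_nonneg h.y₂_nonneg n.cast_nonneg))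
            (mul_nonneg (risingFactorial_nonneg_s9 h.x₁_nonneg n)
              (risingFactorial_nonneg_s9 h.y₁_nonneg n))
      _ = rf x₁ n * (x₁ + n) * (rf y₁ n * (y₁ + n)) := by ring

theorem add_mul_add_le {p w : ℝ → ℝ} (hp : MonotoneOn p (Set.Ici 0))
    (hp_add : p x₁ + p y₁ ≤ p x₂ + p y₂) (hw : MonotoneOn w (Set.Ici 0)) (hw₀ : 0 ≤ w 0) :
    (w x₂ + w y₂) * (p x₁ * w x₁ + p y₁ * w y₁)
      ≤ (w x₁ + w y₁) * (p x₂ * w x₂ + p y₂ * w y₂) := by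
  have hx₂ : x₂ ∈ Set.Ici 0 := h.nonneg
  have hx₁ : x₁ ∈ Set.Ici 0 := h.x₁_nonneg
  have hy₁ : y₁ ∈ Set.Ici 0 := h.y₁_nonneg
  have hy₂ : y₂ ∈ Set.Ici 0 := h.y₂_nonneg
  have hpa := hp hx₂ hx₁ h.le_left
  have hpb := hp hx₁ hy₁ h.le_inner
  have hw₂ : 0 ≤ w x₂ := hw₀.trans (hw Set.self_mem_Ici hx₂ hx₂)
  have hwa := hw hx₂ hx₁ h.le_left
  have hwb := hw hx₁ hy₁ h.le_inner
  have hwc := hw hy₁ hy₂ h.le_right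
  -- lowering `p y₂` to `p x₁ + p y₁ - p x₂` leaves a sum of two nonnegative products
  have key : (w x₁ + w y₁) * (p x₂ * w x₂ + (p x₁ + p y₁ - p x₂) * w y₂)
      - (w x₂ + w y₂) * (p x₁ * w x₁ + p y₁ * w y₁)
      = (p x₁ - p x₂) * (w y₁ * w y₂ - w x₁ * w x₂)
        + (p y₁ - p x₂) * (w x₁ * w y₂ - w x₂ * w y₁) := by ring
  have hww : w x₁ * w x₂ ≤ w y₁ * w y₂ :=
    mul_le_mul hwb (hwa.trans (hwb.trans hwc)) hw₂ (hw₂.trans (hwa.trans hwb))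
  have hww' : w x₂ * w y₁ ≤ w x₁ * w y₂ :=
    mul_le_mul hwa hwc (hw₂.trans (hwa.trans hwb)) (hw₂.trans hwa)
  nlinarith [mul_nonneg (sub_nonneg.2 hpa) (sub_nonneg.2 hww),
    mul_nonneg (sub_nonneg.2 (hpa.trans hpb)) (sub_nonneg.2 hww'),
    mul_le_mul_of_nonneg_left hp_add
      (mul_nonneg (by linarith : 0 ≤ w x₁ + w y₁) (by linarith : 0 ≤ w y₂))]

theorem symmProd_two_mul_le {r : ℕ} (hr : 2 ≤ r) :
    symmProd 2 r x₂ y₂ * symmProd 0 (r + 2) x₁ y₁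
      ≤ symmProd 2 r x₁ y₁ * symmProd 0 (r + 2) x₂ y₂ := by
  obtain ⟨K, rfl⟩ : ∃ K, r = 2 + K := ⟨r - 2, by omega⟩
  have hc : (0 : ℝ) ≤ 2 + K := by positivity
  set w : ℝ → ℝ := fun x => rf (x + 2) K
  set p : ℝ → ℝ := fun x => rf x 2 * rf (x + (2 + K)) 2
  have hnum : ∀ x y, symmProd 2 (2 + K) x y = rf x 2 * rf y 2 * (w x + w y) := fun x y => by
    simp only [symmProd, w, risingFactorial_add _ 2 K, Nat.cast_ofNat]
    ring
  have hden : ∀ x y, symmProd 0 (2 + K + 2) x y = p x * w x + p y * w y := fun x y => by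
    simp only [symmProd, risingFactorial_zero, one_mul, p, w]
    rw [show 2 + K + 2 = 2 + (K + 2) by ring, risingFactorial_add x, risingFactorial_add y,
      risingFactorial_add (x + _), risingFactorial_add (y + _)]
    push_cast
    ring_nf
  have hw : ∀ x, 0 ≤ x → 0 ≤ w x := fun x hx => risingFactorial_nonneg_s9 (by linarith) K
  have hp : ∀ x, 0 ≤ x → 0 ≤ p x := fun x hx =>
    mul_nonneg (risingFactorial_nonneg_s9 hx 2) (risingFactorial_nonneg_s9 (add_nonneg hx hc) 2)
  have hp_add : p x₁ + p y₁ ≤ p x₂ + p y₂ :=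
    h.mul_add_le (risingFactorial_monotoneOn 2) (risingFactorial_nonneg_s9 le_rfl 2)
      (h.risingFactorial_add_le 2) (risingFactorial_add_monotoneOn hc 2)
      (risingFactorial_nonneg_s9 (by linarith) 2) ((h.shift hc).risingFactorial_add_le 2)
  have hexch := h.add_mul_add_le (p := p) (w := w)
    ((risingFactorial_monotoneOn 2).mul (risingFactorial_add_monotoneOn hc 2)
      (fun x hx => risingFactorial_nonneg_s9 hx 2)
      (fun x hx => risingFactorial_nonneg_s9 (add_nonneg (Set.mem_Ici.mp hx) hc) 2))
    hp_add (risingFactorial_add_monotoneOn zero_le_two K) (hw 0 le_rfl)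
  rw [hnum, hnum, hden, hden, mul_assoc (rf x₂ 2 * rf y₂ 2), mul_assoc (rf x₁ 2 * rf y₁ 2)]
  exact mul_le_mul (h.risingFactorial_mul_le 2) hexch
    (mul_nonneg (add_nonneg (hw _ h.nonneg) (hw _ h.y₂_nonneg))
      (add_nonneg (mul_nonneg (hp _ h.x₁_nonneg) (hw _ h.x₁_nonneg))
        (mul_nonneg (hp _ h.y₁_nonneg) (hw _ h.y₁_nonneg))))
    (mul_nonneg (risingFactorial_nonneg_s9 h.x₁_nonneg 2) (risingFactorial_nonneg_s9 h.y₁_nonneg 2))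

theorem symmProd_le_of_le {i r : ℕ} (hi : 0 < i) (hr : 2 ≤ r)
    (hle : symmProd i (i + (r + 2)) x₂ y₂ ≤ symmProd i (i + (r + 2)) x₁ y₁) :
    symmProd (i + 2) (i + r) x₂ y₂ ≤ symmProd (i + 2) (i + r) x₁ y₁ := by
  have hsplit : ∀ x y, symmProd i (i + (r + 2)) x y
      = rf x i * rf y i * symmProd 0 (r + 2) (x + i) (y + i) := fun x y => by
    simpa using symmProd_add i 0 (r + 2) x y
  rw [hsplit, hsplit] at hle
  rw [symmProd_add, symmProd_add]
  have hi' : (0 : ℝ) < i := Nat.cast_pos.mpr hi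
  have hD₁ : 0 < symmProd 0 (r + 2) (x₁ + i) (y₁ + i) := by
    simp only [symmProd, risingFactorial_zero, one_mul]
    have := risingFactorial_pos (by linarith [h.y₁_nonneg] : 0 < y₁ + i) (r + 2)
    have := risingFactorial_nonneg_s9 (by linarith [h.x₁_nonneg] : 0 ≤ x₁ + i) (r + 2)
    linarith
  have ha₂ : 0 ≤ rf x₂ i * rf y₂ i :=
    mul_nonneg (risingFactorial_nonneg_s9 h.nonneg i) (risingFactorial_nonneg_s9 h.y₂_nonneg i)
  have hN₁ : 0 ≤ symmProd 2 r (x₁ + i) (y₁ + i) :=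
    symmProd_nonneg (by linarith [h.x₁_nonneg]) (by linarith [h.y₁_nonneg]) 2 r
  have hcross := (h.shift hi'.le).symmProd_two_mul_le hr
  refine le_of_mul_le_mul_right ?_ hD₁
  nlinarith [mul_le_mul_of_nonneg_left hcross ha₂, mul_le_mul_of_nonneg_left hle hN₁]

theorem pairMoment_zero_nonneg (r : ℕ) : 0 ≤ pairMoment x₁ y₁ x₂ y₂ 0 r := by
  simp only [pairMoment, pochConv_zero, mul_one]
  have hd : 0 ≤ y₁ - x₁ := sub_nonneg.2 h.le_inner
  have hd₂ : (y₁ - x₁) ^ r ≤ (y₂ - x₂) ^ r :=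
    pow_le_pow_left₀ hd (by linarith [h.le_left, h.le_right]) r
  have hdσ : (y₁ - x₁) ^ r ≤ (x₁ + y₁ + 2) ^ r :=
    pow_le_pow_left₀ hd (by linarith [h.x₁_nonneg]) r
  nlinarith [mul_le_mul_of_nonneg_left hd₂ (mul_nonneg h.nonneg h.y₂_nonneg),
    mul_le_mul_of_nonneg_left hdσ (sub_nonneg.2 h.mul_le)]

theorem pairMoment_nonneg (n r : ℕ) : 0 ≤ pairMoment x₁ y₁ x₂ y₂ n r := by
  refine nonneg_of_recurrence (σ := x₁ + y₁ + 2) (by linarith [h.x₁_nonneg, h.y₁_nonneg])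
    h.pairMoment_zero_nonneg (fun r => ?_) (fun n r => ?_) n r
  · simp only [pairMoment, pochConv_zero, pochConv_one]
    ring
  · simp only [pairMoment]
    linear_combination
      (x₁ * y₁ - x₂ * y₂) * (x₁ + y₁ + 2) ^ r * pochConv_neg_one_recurrence 0 (x₁ + y₁ + 2) n
      + x₂ * y₂ * (y₂ - x₂) ^ r * pochConv_neg_one_recurrence (x₂ + 1) (y₂ + 1) n
      - x₁ * y₁ * (y₁ - x₁) ^ r * pochConv_neg_one_recurrence (x₁ + 1) (y₁ + 1) n
      - x₂ * y₂ * (y₂ - x₂) ^ r * pochConv (-1) (x₂ + 1) (y₂ + 1) n * h.add_eq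

theorem sum_convTerm_sub_nonneg {m : ℕ} (hm : 1 ≤ m) :
    0 ≤ ∑ k ∈ Icc 1 (m - 1), (convTerm x₁ y₁ m k - convTerm x₂ y₂ m k) := by
  have hvdm : ∀ x y : ℝ, x + y = x₁ + y₁ →
      pochConv 1 (x + 1) (y + 1) (2 * m - 2) = pochConv (-1) 0 (x₁ + y₁ + 2) (2 * m - 2) := by
    intro x y hxy
    rw [pochConv_one_left, pochConv_zero_left, show x + 1 + (y + 1) = x₁ + y₁ + 2 by linarith]
  rw [sum_sub_distrib, sum_Icc_convTerm _ _ hm, sum_Icc_convTerm _ _ hm, hvdm x₁ y₁ rfl,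
    hvdm x₂ y₂ h.add_eq.symm]
  have := h.pairMoment_nonneg (2 * m - 2) 0
  simp only [pairMoment, pow_zero, mul_one] at this
  linarith

theorem sum_Icc_convTerm_sub_nonneg {m j : ℕ} (hj : 1 ≤ j) (hjm : 2 * j ≤ m) :
    0 ≤ ∑ k ∈ Icc j (m - j), (convTerm x₁ y₁ m k - convTerm x₂ y₂ m k) := by
  refine sum_Icc_nonneg_of_pairSum (h.sum_convTerm_sub_nonneg (by omega))
    (fun k hk hkm hP => ?_) hj hjm
  have hpair : ∀ k ≤ m, convTerm x₁ y₁ m k - convTerm x₂ y₂ m k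
      + (convTerm x₁ y₁ m (m - k) - convTerm x₂ y₂ m (m - k))
      = (symmProd (2 * k) (2 * (m - k)) x₁ y₁ - symmProd (2 * k) (2 * (m - k)) x₂ y₂)
          / ((2 * k - 1).factorial * (2 * (m - k) - 1).factorial) := fun k hk => by
    rw [sub_div, ← convTerm_add_convTerm_sub _ _ hk, ← convTerm_add_convTerm_sub _ _ hk]
    ring
  rw [hpair k (by omega)] at hP
  rw [hpair (k + 1) (by omega)]
  have hle := (le_div_iff₀ (by positivity)).mp hP
  rw [zero_mul, sub_nonneg] at hle
  have hnext := h.symmProd_le_of_le (i := 2 * k) (r := 2 * m - 4 * k - 2) (by omega) (by omega)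
    (by rwa [show 2 * k + (2 * m - 4 * k - 2 + 2) = 2 * (m - k) by omega])
  rw [show 2 * k + 2 = 2 * (k + 1) by ring,
    show 2 * k + (2 * m - 4 * k - 2) = 2 * (m - (k + 1)) by omega] at hnext
  exact div_nonneg (sub_nonneg.mpr hnext) (by positivity)

end NestedPairs

theorem IsLogConcaveSeq.mul_succ_le {g : ℕ → ℝ} (hg : IsLogConcaveSeq g) {i j : ℕ} (hij : i ≤ j) :
    g i * g (j + 1) ≤ g (i + 1) * g j := by
  obtain ⟨hnonneg, -, hlc, hsupp⟩ := hg
  induction j, hij using Nat.le_induction with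
  | base => exact (mul_comm _ _).le
  | succ j hij ih =>
    rcases (hnonneg (j + 1)).eq_or_lt with hzero | hpos
    · -- a zero at `j + 1` forces zeros everywhere after it or everywhere before it
      rcases hsupp (j + 1) hzero.symm with hafter | hbefore
      · simp [hafter 1, ← hzero]
      · have hi : g i = 0 := by
          simpa [show j + 1 - (j + 1 - i) = i by omega] using hbefore (j + 1 - i) (by omega)
        simp [hi, ← hzero]
    · refine le_of_mul_le_mul_right ?_ hpos
      calc g i * g (j + 1 + 1) * g (j + 1) = g i * g (j + 1) * g (j + 2) := by ring
        _ ≤ g (i + 1) * g j * g (j + 2) := mul_le_mul_of_nonneg_right ih (hnonneg _)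
        _ = g (i + 1) * (g j * g (j + 2)) := by ring
        _ ≤ g (i + 1) * g (j + 1) ^ 2 := mul_le_mul_of_nonneg_left (hlc j) (hnonneg _)
        _ = g (i + 1) * g (j + 1) * g (j + 1) := by ring

theorem IsLogConcaveSeq.mul_sub_le_mul_sub {f : ℕ → ℝ} (hf : IsLogConcaveSeq (fun n => f (n + 1)))
    {m j : ℕ} (hj : 1 ≤ j) (hjm : 2 * (j + 1) ≤ m) :
    f j * f (m - j) ≤ f (j + 1) * f (m - (j + 1)) := by
  have := hf.mul_succ_le (show j - 1 ≤ m - j - 2 by omega)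
  rwa [show j - 1 + 1 = j by omega, show m - j - 2 + 1 + 1 = m - j by omega,
    show m - j - 2 + 1 = m - (j + 1) by omega] at this

theorem coeff_mul_coeff (f : ℕ → ℝ) (x y : ℝ) {m k : ℕ} (hk : 0 < k) (hkm : k < m) :
    coeff f k x * coeff f (m - k) y = f k * f (m - k) * convTerm x y m k := by
  simp only [coeff, convTerm, if_neg hk.ne', if_neg (Nat.sub_ne_zero_of_lt hkm)]
  ring

theorem sum_coeff_mul_sub_eq (f : ℕ → ℝ) (x₁ y₁ x₂ y₂ : ℝ) (m : ℕ) :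
    ∑ k ∈ range (m + 1), (coeff f k x₁ * coeff f (m - k) y₁ - coeff f k x₂ * coeff f (m - k) y₂)
      = ∑ k ∈ Icc 1 (m - 1), f k * f (m - k) * (convTerm x₁ y₁ m k - convTerm x₂ y₂ m k) := by
  rw [← sum_subset (s₁ := Icc 1 (m - 1)) (fun k hk => by simp at hk ⊢; omega)]
  · refine sum_congr rfl fun k hk => ?_
    rw [mem_Icc] at hk
    rw [coeff_mul_coeff f _ _ (by omega) (by omega), coeff_mul_coeff f _ _ (by omega) (by omega)]
    ring
  · intro k hk hk'
    simp only [mem_range, mem_Icc, not_and_or, not_le] at hk hk'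
    obtain rfl | rfl : k = 0 ∨ k = m := by omega
    all_goals simp [coeff]

theorem sum_coeff_mul_comm (f : ℕ → ℝ) (x y : ℝ) (m : ℕ) :
    ∑ k ∈ range (m + 1), coeff f k x * coeff f (m - k) y
      = ∑ k ∈ range (m + 1), coeff f k y * coeff f (m - k) x := by
  rw [← sum_range_reflect]
  refine sum_congr rfl fun k hk => ?_
  rw [mem_range] at hk
  rw [show m + 1 - 1 - k = m - k by omega, Nat.sub_sub_self (by omega), mul_comm]

theorem stmt_9 (f : ℕ → ℝ) (hf : IsLogConcaveSeq (fun n => f (n + 1)))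
    (μ α β : ℝ) (hμ : 0 ≤ μ) (hα : 0 < α) (hβ : 0 < β) (m : ℕ) :
    0 ≤ ∑ k ∈ Finset.range (m + 1),
      (coeff f k (μ + α) * coeff f (m - k) (μ + β)
        - coeff f k μ * coeff f (m - k) (μ + α + β)) := by
  wlog hαβ : α ≤ β generalizing α β
  · have h := this β α hβ hα (le_of_not_ge hαβ)
    rwa [sum_sub_distrib, sum_coeff_mul_comm, add_right_comm μ β α, ← sum_sub_distrib] at h
  have hnested : NestedPairs (μ + α) (μ + β) μ (μ + α + β) :=
    ⟨by ring, by linarith, by linarith, hμ⟩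
  have hf₀ : ∀ k, 1 ≤ k → 0 ≤ f k := fun k hk => by
    simpa [Nat.sub_add_cancel hk] using hf.1 (k - 1)
  rw [sum_coeff_mul_sub_eq]
  refine sum_mul_nonneg_of_unimodal (c := fun k => f k * f (m - k)) (fun k hk => ?_)
    (fun k hk => ?_) (fun j hj hjm => hf.mul_sub_le_mul_sub hj hjm)
    (fun j hj hjm => hnested.sum_Icc_convTerm_sub_nonneg hj hjm)
  · rw [mem_Icc] at hk
    simp only [Nat.sub_sub_self (show k ≤ m by omega), mul_comm]
  · rw [mem_Icc] at hk
    exact mul_nonneg (hf₀ k hk.1) (hf₀ _ (by omega))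
end

section
/- Let r ≥ 1 be an integer and {f_n}_{n≥0} an arbitrary nonnegative real sequence. Then for every μ > 0, every α, β > 0, and every integer m ≥ 0, Σ_{k=0}^{m} f_k f_{m−k} [ Γ(μ+α+rk)Γ(μ+β+r(m−k)) − Γ(μ+rk)Γ(μ+α+β+r(m−k)) ] ≤ 0, where Γ is Euler's gamma function. In other words, the formal power series μ ↦ Σ_{n≥0} f_n Γ(μ+rn) x^n is coefficient-wise log-convex. -/
/-!
Pair the `k`-th and `(m - k)`-th terms of the sum. With `x = μ + rk`, `y = μ + r(m - k)` and
`s = α + β`, log-convexity of `Γ` interpolates `Γ(x + α)`, `Γ(x + β)`, `Γ(y + α)`, `Γ(y + β)`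
between the values at `x, x + s, y, y + s`, so the two "crossed" products are bounded by `A^p B^q`
and `A^q B^p`, where `A = Γ(x)Γ(y + s)`, `B = Γ(x + s)Γ(y)` and `p = β/s`, `q = α/s`.
Weighted AM-GM bounds their sum by `A + B`, which is exactly the nonpositivity of the pair.
-/

open Real Finset

theorem Finset.sum_range_nonpos_of_add_reflect_nonpos {T : ℕ → ℝ} {m : ℕ}
    (h : ∀ k ≤ m, T k + T (m - k) ≤ 0) : ∑ k ∈ range (m + 1), T k ≤ 0 := by
  have hreflect : ∑ k ∈ range (m + 1), T (m - k) = ∑ k ∈ range (m + 1), T k := by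
    simpa using sum_range_reflect T (m + 1)
  have hpairs : ∑ k ∈ range (m + 1), (T k + T (m - k)) ≤ 0 :=
    sum_nonpos fun k hk => h k (Nat.lt_succ_iff.mp (mem_range.mp hk))
  rw [sum_add_distrib, hreflect] at hpairs
  linarith

theorem Real.rpow_mul_rpow_add_rpow_mul_rpow_le_add {A B p q : ℝ} (hA : 0 ≤ A) (hB : 0 ≤ B)
    (hp : 0 ≤ p) (hq : 0 ≤ q) (hpq : p + q = 1) :
    A ^ p * B ^ q + A ^ q * B ^ p ≤ A + B := by
  have h₁ := geom_mean_le_arith_mean2_weighted hp hq hA hB hpq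
  have h₂ := geom_mean_le_arith_mean2_weighted hq hp hA hB (by rw [add_comm, hpq])
  linear_combination h₁ + h₂ + (A + B) * hpq

section LogConvex

variable {E : Type*} [AddCommGroup E] [Module ℝ E] {s : Set E} {φ : E → ℝ}

theorem ConvexOn.le_rpow_mul_rpow_of_log (hφ : ConvexOn ℝ s (log ∘ φ))
    (hpos : ∀ x ∈ s, 0 < φ x) {x y : E} (hx : x ∈ s) (hy : y ∈ s) {a b : ℝ}
    (ha : 0 ≤ a) (hb : 0 ≤ b) (hab : a + b = 1) :
    φ (a • x + b • y) ≤ φ x ^ a * φ y ^ b := by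
  have hlog := hφ.2 hx hy ha hb hab
  simp only [Function.comp, smul_eq_mul] at hlog
  calc φ (a • x + b • y) = exp (log (φ (a • x + b • y))) :=
        (exp_log (hpos _ (hφ.1 hx hy ha hb hab))).symm
    _ ≤ exp (a * log (φ x) + b * log (φ y)) := exp_le_exp.mpr hlog
    _ = φ x ^ a * φ y ^ b := by
        rw [exp_add, rpow_def_of_pos (hpos x hx), rpow_def_of_pos (hpos y hy), mul_comm a,
          mul_comm b]

end LogConvex

section LogConvexReal

variable {s : Set ℝ} {φ : ℝ → ℝ}

theorem ConvexOn.le_rpow_mul_rpow_add_of_log (hφ : ConvexOn ℝ s (log ∘ φ))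
    (hpos : ∀ x ∈ s, 0 < φ x) {x α β : ℝ} (hx : x ∈ s) (hxs : x + α + β ∈ s)
    (hα : 0 ≤ α) (hβ : 0 ≤ β) (hαβ : 0 < α + β) :
    φ (x + α) ≤ φ x ^ (β / (α + β)) * φ (x + α + β) ^ (α / (α + β)) := by
  have hweights : β / (α + β) + α / (α + β) = 1 := by field_simp; ring
  have hpoint : β / (α + β) * x + α / (α + β) * (x + α + β) = x + α := by field_simp; ring
  simpa only [smul_eq_mul, hpoint] using
    hφ.le_rpow_mul_rpow_of_log hpos hx hxs (by positivity) (by positivity) hweights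

theorem ConvexOn.mul_le_rpow_mul_rpow_of_log (hφ : ConvexOn ℝ s (log ∘ φ))
    (hpos : ∀ x ∈ s, 0 < φ x) {x y α β : ℝ} (hx : x ∈ s) (hy : y ∈ s)
    (hxs : x + α + β ∈ s) (hys : y + α + β ∈ s) (hα : 0 ≤ α) (hβ : 0 ≤ β) (hαβ : 0 < α + β) :
    φ (x + α) * φ (y + β) ≤
      (φ x * φ (y + α + β)) ^ (β / (α + β)) * (φ (x + α + β) * φ y) ^ (α / (α + β)) := by
  have hnonneg : ∀ z ∈ s, 0 ≤ φ z := fun z hz => (hpos z hz).le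
  have hxα := hφ.le_rpow_mul_rpow_add_of_log hpos hx hxs hα hβ hαβ
  have hyβ := hφ.le_rpow_mul_rpow_add_of_log hpos hy (by rwa [add_right_comm]) hβ hα
    (by rwa [add_comm])
  rw [add_right_comm _ β, add_comm β] at hyβ
  calc φ (x + α) * φ (y + β)
      ≤ (φ x ^ (β / (α + β)) * φ (x + α + β) ^ (α / (α + β))) *
          (φ y ^ (α / (α + β)) * φ (y + α + β) ^ (β / (α + β))) :=
        mul_le_mul hxα hyβ (hnonneg _ (hφ.1.ordConnected.out hy hys ⟨by linarith, by linarith⟩))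
          (mul_nonneg (rpow_nonneg (hnonneg x hx) _) (rpow_nonneg (hnonneg _ hxs) _))
    _ = _ := by
        rw [mul_rpow (hnonneg x hx) (hnonneg _ hys), mul_rpow (hnonneg _ hxs) (hnonneg y hy)]
        ring

theorem ConvexOn.mul_add_mul_le_of_log (hφ : ConvexOn ℝ s (log ∘ φ))
    (hpos : ∀ x ∈ s, 0 < φ x) {x y α β : ℝ} (hx : x ∈ s) (hy : y ∈ s)
    (hxs : x + α + β ∈ s) (hys : y + α + β ∈ s) (hα : 0 ≤ α) (hβ : 0 ≤ β) :
    φ (x + α) * φ (y + β) + φ (x + β) * φ (y + α) ≤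
      φ x * φ (y + α + β) + φ (x + α + β) * φ y := by
  rcases (add_nonneg hα hβ).eq_or_lt with hαβ | hαβ
  · obtain ⟨rfl, rfl⟩ : α = 0 ∧ β = 0 := ⟨by linarith, by linarith⟩
    simp only [add_zero]
    linarith
  have hcross₁ := hφ.mul_le_rpow_mul_rpow_of_log hpos hx hy hxs hys hα hβ hαβ
  have hcross₂ := hφ.mul_le_rpow_mul_rpow_of_log hpos hx hy (by rwa [add_right_comm])
    (by rwa [add_right_comm]) hβ hα (by rwa [add_comm])
  rw [add_right_comm _ β, add_right_comm _ β, add_comm β] at hcross₂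
  have hamgm := rpow_mul_rpow_add_rpow_mul_rpow_le_add
    (mul_nonneg (hpos x hx).le (hpos _ hys).le) (mul_nonneg (hpos _ hxs).le (hpos y hy).le)
    (by positivity : 0 ≤ β / (α + β)) (by positivity : 0 ≤ α / (α + β))
    (by field_simp; ring)
  linarith

end LogConvexReal

theorem stmt_11_general (r : ℕ) (f : ℕ → ℝ) (hf : ∀ n, 0 ≤ f n)
    (μ α β : ℝ) (hμ : 0 < μ) (hα : 0 < α) (hβ : 0 < β) (m : ℕ) :
    ∑ k ∈ Finset.range (m + 1), f k * f (m - k) *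
      (Real.Gamma (μ + α + (r * k : ℕ)) * Real.Gamma (μ + β + (r * (m - k) : ℕ))
        - Real.Gamma (μ + (r * k : ℕ)) * Real.Gamma (μ + α + β + (r * (m - k) : ℕ))) ≤ 0 := by
  refine sum_range_nonpos_of_add_reflect_nonpos fun k hk => ?_
  rw [Nat.sub_sub_self hk]
  have hc : (0 : ℝ) ≤ (r * k : ℕ) := Nat.cast_nonneg _
  have hd : (0 : ℝ) ≤ (r * (m - k) : ℕ) := Nat.cast_nonneg _
  generalize ((r * k : ℕ) : ℝ) = c at *
  generalize ((r * (m - k) : ℕ) : ℝ) = d at *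
  rw [add_right_comm (μ + α) β c, add_right_comm (μ + α) β d, add_right_comm μ α c,
    add_right_comm μ α d, add_right_comm μ β c, add_right_comm μ β d]
  have hpair := convexOn_log_Gamma.mul_add_mul_le_of_log (fun _ => Gamma_pos_of_pos)
    (by positivity : 0 < μ + c) (by positivity : 0 < μ + d) (by positivity : 0 < μ + c + α + β)
    (by positivity : 0 < μ + d + α + β) hα.le hβ.le
  have hweight := mul_le_mul_of_nonneg_left hpair (mul_nonneg (hf k) (hf (m - k)))
  linear_combination hweight

theorem stmt_11 (r : ℕ) (hr : 1 ≤ r) (f : ℕ → ℝ) (hf : ∀ n, 0 ≤ f n)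
    (μ α β : ℝ) (hμ : 0 < μ) (hα : 0 < α) (hβ : 0 < β) (m : ℕ) :
    ∑ k ∈ Finset.range (m + 1), f k * f (m - k) *
      (Real.Gamma (μ + α + (r * k : ℕ)) * Real.Gamma (μ + β + (r * (m - k) : ℕ))
        - Real.Gamma (μ + (r * k : ℕ)) * Real.Gamma (μ + α + β + (r * (m - k) : ℕ))) ≤ 0 :=
  stmt_11_general r f hf μ α β hμ hα hβ m
end

section
/- Let a ≥ b > 0 and c > 0 be real numbers, and define h_n = (ψ(c+n) − ψ(c)) · (a)_n / (b)_n for integers n ≥ 0, where ψ(z) = Γ'(z)/Γ(z) is the digamma function (the derivative of log Γ). Then the sequence {h_n}_{n≥0} is strictly log-concave: h_n^2 > h_{n−1} h_{n+1} for every n ≥ 1. -/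
/-- The digamma function `ψ = (log Γ)'`. -/
noncomputable def digamma (z : ℝ) : ℝ :=
  deriv (fun x : ℝ => Real.log (Real.Gamma x)) z

open Finset

lemma risingFactorial_pos_s18 {μ : ℝ} (hμ : 0 < μ) : ∀ n : ℕ, 0 < risingFactorial μ n
  | 0 => one_pos
  | n + 1 => mul_pos (risingFactorial_pos_s18 hμ n) (by positivity)

lemma differentiableAt_log_Gamma {x : ℝ} (hx : 0 < x) :
    DifferentiableAt ℝ (fun y : ℝ => Real.log (Real.Gamma y)) x :=
  (Real.differentiableAt_Gamma fun m hm => by linarith [hm ▸ hx, m.cast_nonneg (α := ℝ)]).log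
    (Real.Gamma_pos_of_pos hx).ne'

lemma digamma_add_one {x : ℝ} (hx : 0 < x) : digamma (x + 1) = digamma x + 1 / x := by
  have hshift : (fun y : ℝ => Real.log (Real.Gamma (y + 1)))
      =ᶠ[nhds x] fun y => Real.log y + Real.log (Real.Gamma y) := by
    filter_upwards [eventually_gt_nhds hx] with y hy
    rw [Real.Gamma_add_one hy.ne', Real.log_mul hy.ne' (Real.Gamma_pos_of_pos hy).ne']
  calc digamma (x + 1)
      = deriv (fun y : ℝ => Real.log (Real.Gamma (y + 1))) x :=
        (deriv_comp_add_const (fun y => Real.log (Real.Gamma y)) 1 x).symm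
    _ = deriv (fun y : ℝ => Real.log y + Real.log (Real.Gamma y)) x := hshift.deriv_eq
    _ = digamma x + 1 / x := by
        rw [deriv_fun_add (Real.differentiableAt_log hx.ne') (differentiableAt_log_Gamma hx),
          Real.deriv_log, digamma, one_div, add_comm]

lemma digamma_add_nat_sub_digamma {c : ℝ} (hc : 0 < c) (n : ℕ) :
    digamma (c + n) - digamma c = ∑ k ∈ range n, 1 / (c + k) := by
  induction n with
  | zero => simp
  | succ n ih =>
    rw [sum_range_succ, ← ih, Nat.cast_succ, ← add_assoc, digamma_add_one (by positivity)]
    ring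

lemma mul_lt_sq_of_sub_le_sub {x y z : ℝ} (hx : 0 ≤ x) (hxy : x < y) (hyz : z - y ≤ y - x) :
    x * z < y ^ 2 := by
  nlinarith [mul_nonneg hx (sub_nonneg.2 hyz)]

lemma sum_range_mul_lt_sq_of_antitone {x : ℕ → ℝ} (hx : ∀ k, 0 < x k) (hanti : Antitone x)
    (n : ℕ) :
    (∑ k ∈ range n, x k) * (∑ k ∈ range (n + 2), x k) < (∑ k ∈ range (n + 1), x k) ^ 2 := by
  refine mul_lt_sq_of_sub_le_sub (sum_nonneg fun k _ => (hx k).le) ?_ ?_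
  · simpa only [sum_range_succ, lt_add_iff_pos_right] using hx n
  · simpa only [sum_range_succ, add_sub_cancel_left] using hanti n.le_succ

lemma risingFactorial_div_pos {a b : ℝ} (ha : 0 < a) (hb : 0 < b) (n : ℕ) :
    0 < risingFactorial a n / risingFactorial b n :=
  div_pos (risingFactorial_pos_s18 ha n) (risingFactorial_pos_s18 hb n)

lemma add_div_add_le_add_div_add {a b : ℝ} (hb : 0 < b) (hab : b ≤ a) {s t : ℝ} (hs : 0 ≤ s)
    (hst : s ≤ t) : (a + t) / (b + t) ≤ (a + s) / (b + s) := by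
  rw [div_le_div_iff₀ (by linarith) (by linarith)]
  nlinarith

lemma risingFactorial_div_succ {a b : ℝ} (n : ℕ) :
    risingFactorial a (n + 1) / risingFactorial b (n + 1) =
      risingFactorial a n / risingFactorial b n * ((a + n) / (b + n)) := by
  simp only [risingFactorial, div_mul_div_comm]

lemma risingFactorial_div_mul_le_sq {a b : ℝ} (hb : 0 < b) (hab : b ≤ a) (n : ℕ) :
    risingFactorial a n / risingFactorial b n *
        (risingFactorial a (n + 2) / risingFactorial b (n + 2)) ≤
      (risingFactorial a (n + 1) / risingFactorial b (n + 1)) ^ 2 := by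
  set R : ℕ → ℝ := fun k => risingFactorial a k / risingFactorial b k
  have hR := risingFactorial_div_pos (hb.trans_le hab) hb
  have hratio : (a + (n + 1 : ℕ)) / (b + (n + 1 : ℕ)) ≤ (a + n) / (b + n) :=
    add_div_add_le_add_div_add hb hab n.cast_nonneg (by push_cast; linarith)
  calc R n * R (n + 2) = R n * R (n + 1) * ((a + (n + 1 : ℕ)) / (b + (n + 1 : ℕ))) := by
        simp only [R, risingFactorial_div_succ (n + 1)]; ring
    _ ≤ R n * R (n + 1) * ((a + n) / (b + n)) := by
        gcongr
        exact (mul_pos (hR n) (hR (n + 1))).le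
    _ = R (n + 1) ^ 2 := by simp only [R, risingFactorial_div_succ n]; ring

lemma mul_mul_mul_lt_sq_mul {u₀ u₁ u₂ v₀ v₁ v₂ : ℝ} (hu : u₀ * u₂ < u₁ ^ 2)
    (hv_pos : 0 < v₀ * v₂) (hv : v₀ * v₂ ≤ v₁ ^ 2) : u₀ * v₀ * (u₂ * v₂) < (u₁ * v₁) ^ 2 :=
  calc u₀ * v₀ * (u₂ * v₂) = u₀ * u₂ * (v₀ * v₂) := by ring
    _ < u₁ ^ 2 * (v₀ * v₂) := mul_lt_mul_of_pos_right hu hv_pos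
    _ ≤ u₁ ^ 2 * v₁ ^ 2 := mul_le_mul_of_nonneg_left hv (sq_nonneg _)
    _ = (u₁ * v₁) ^ 2 := by ring

theorem stmt_18 (a b c : ℝ) (hb : 0 < b) (hab : b ≤ a) (hc : 0 < c) (h : ℕ → ℝ)
    (hdef : ∀ n : ℕ, h n = (digamma (c + n) - digamma c) * risingFactorial a n / risingFactorial b n) :
    ∀ n : ℕ, h n * h (n + 2) < (h (n + 1)) ^ 2 := by
  intro n
  have hfactor : ∀ k : ℕ, h k = (∑ j ∈ range k, 1 / (c + j)) *
      (risingFactorial a k / risingFactorial b k) := fun k => by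
    rw [hdef, digamma_add_nat_sub_digamma hc, mul_div_assoc]
  have hpos := risingFactorial_div_pos (hb.trans_le hab) hb
  have hharmonic : Antitone fun k : ℕ => 1 / (c + k) := fun i j hij => by
    dsimp only
    gcongr
  rw [hfactor, hfactor, hfactor]
  exact mul_mul_mul_lt_sq_mul
    (sum_range_mul_lt_sq_of_antitone (fun k => by positivity) hharmonic n)
    (mul_pos (hpos n) (hpos (n + 2))) (risingFactorial_div_mul_le_sq hb hab n)
end
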